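/- arXiv:2003.09142 — 9 statements merged into one kernel-verified Lean document; each statement's English description precedes it below -/
import Mathlib

section
/- Suppose ☐ is a weak shuffle product on K⟨X⟩ (i.e. an associative and commutative bilinear product with 1 ☐ u = u ☐ 1 = u and (a·u) ☐ (b·v) = f₁(a⊗b)·a·(u ☐ (b·v)) + f₂(a⊗b)·b·((a·u) ☐ v) for scalar-valued maps f₁, f₂). Then for any two distinct letters a, b one has f₁(a⊗b) = f₂(b⊗a). -/
/-! On two letters the recursion gives `a ☐ b = f₁(a⊗b)·ab + f₂(a⊗b)·ba`; comparing the
coefficients of the word `ab` in `a ☐ b = b ☐ a` yields `f₁(a⊗b) = f₂(b⊗a)`. -/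

open Finsupp

section WeakShuffle

variable {K X : Type*} [CommSemiring K]
  (B : (List X →₀ K) →ₗ[K] (List X →₀ K) →ₗ[K] (List X →₀ K)) (f1 f2 : X → X → K)

theorem weakShuffle_single_letter_letter
    (hunit_left : ∀ x, B (single [] 1) x = x) (hunit_right : ∀ x, B x (single [] 1) = x)
    (hrec : ∀ (a b : X) (u v : List X),
      B (single (a :: u) 1) (single (b :: v) 1) =
        f1 a b • mapDomain (a :: ·) (B (single u 1) (single (b :: v) 1)) +
        f2 a b • mapDomain (b :: ·) (B (single (a :: u) 1) (single v 1)))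
    (c d : X) :
    B (single [c] 1) (single [d] 1) = f1 c d • single [c, d] 1 + f2 c d • single [d, c] 1 := by
  rw [hrec c d [] [], hunit_left, hunit_right, mapDomain_single, mapDomain_single]

end WeakShuffle

theorem weakShuffle_f1_eq_f2_swap_general {K X : Type*} [Field K]
    (B : (List X →₀ K) →ₗ[K] (List X →₀ K) →ₗ[K] (List X →₀ K))
    (f1 f2 : X → X → K)
    (hcomm : ∀ x y, B x y = B y x)
    (hunit : ∀ x, B (Finsupp.single [] 1) x = x)
    (hrec : ∀ (a b : X) (u v : List X),
      B (Finsupp.single (a :: u) 1) (Finsupp.single (b :: v) 1) =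
        f1 a b • Finsupp.mapDomain (a :: ·)
            (B (Finsupp.single u 1) (Finsupp.single (b :: v) 1)) +
        f2 a b • Finsupp.mapDomain (b :: ·)
            (B (Finsupp.single (a :: u) 1) (Finsupp.single v 1)))
    (a b : X) (hab : a ≠ b) :
    f1 a b = f2 b a := by
  have hunit_right : ∀ x, B x (single [] 1) = x := fun x => hcomm x _ ▸ hunit x
  have h := hcomm (single [a] 1) (single [b] 1)
  rw [weakShuffle_single_letter_letter B f1 f2 hunit hunit_right hrec,
    weakShuffle_single_letter_letter B f1 f2 hunit hunit_right hrec] at h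
  have hcoeff := congrArg (· [a, b]) h
  simpa [single_apply, hab, hab.symm] using hcoeff

/-- If `☐` (given by the bilinear map `B`) is a weak shuffle product on `K⟨X⟩`
with structure constants `f₁, f₂`, then `f₁(a⊗b) = f₂(b⊗a)` for distinct
letters `a, b`. -/
theorem weakShuffle_f1_eq_f2_swap {K X : Type*} [Field K] [CharZero K]
    (B : (List X →₀ K) →ₗ[K] (List X →₀ K) →ₗ[K] (List X →₀ K))
    (f1 f2 : X → X → K)
    (hcomm : ∀ x y, B x y = B y x)
    (hassoc : ∀ x y z, B (B x y) z = B x (B y z))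
    (hunit : ∀ x, B (Finsupp.single [] 1) x = x)
    (hrec : ∀ (a b : X) (u v : List X),
      B (Finsupp.single (a :: u) 1) (Finsupp.single (b :: v) 1) =
        f1 a b • Finsupp.mapDomain (a :: ·)
            (B (Finsupp.single u 1) (Finsupp.single (b :: v) 1)) +
        f2 a b • Finsupp.mapDomain (b :: ·)
            (B (Finsupp.single (a :: u) 1) (Finsupp.single v 1)))
    (a b : X) (hab : a ≠ b) :
    f1 a b = f2 b a :=
  weakShuffle_f1_eq_f2_swap_general B f1 f2 hcomm hunit hrec a b hab
end

section
/- Suppose ☐ is a weak shuffle product on K⟨X⟩ determined by structure constants f₁, f₂. Then for any three distinct letters a, b, c, the identity f₁(a⊗b)·f₁(b⊗c)·(f₁(a⊗c) − 1) = 0 holds. -/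
/-! Compare the coefficient of the word `abc` on both sides of `(a ☐ b) ☐ c = a ☐ (b ☐ c)`.
Expanding with the recursion, only `f₁(a⊗b) f₁(a⊗c) f₁(b⊗c)` survives on the left and only
`f₁(a⊗b) f₁(b⊗c)` on the right, because the letters are distinct. -/

namespace WeakShuffle

variable {K X : Type*} [CommSemiring K]
  (B : (List X →₀ K) →ₗ[K] (List X →₀ K) →ₗ[K] (List X →₀ K)) (f1 f2 : X → X → K)

def Recursion : Prop :=
  ∀ (a b : X) (u v : List X),
    B (Finsupp.single (a :: u) 1) (Finsupp.single (b :: v) 1) =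
      f1 a b • Finsupp.mapDomain (a :: ·)
          (B (Finsupp.single u 1) (Finsupp.single (b :: v) 1)) +
      f2 a b • Finsupp.mapDomain (b :: ·)
          (B (Finsupp.single (a :: u) 1) (Finsupp.single v 1))

variable {B f1 f2}

theorem letter_mul_letter (hcomm : ∀ x y, B x y = B y x)
    (hunit : ∀ x, B (Finsupp.single [] 1) x = x) (hrec : Recursion B f1 f2) (x y : X) :
    B (Finsupp.single [x] 1) (Finsupp.single [y] 1) =
      f1 x y • Finsupp.single [x, y] 1 + f2 x y • Finsupp.single [y, x] 1 := by
  rw [hrec x y [] [], hunit, hcomm, hunit]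
  simp only [Finsupp.mapDomain_single]

theorem pair_mul_letter (hcomm : ∀ x y, B x y = B y x)
    (hunit : ∀ x, B (Finsupp.single [] 1) x = x) (hrec : Recursion B f1 f2) (x y z : X) :
    B (Finsupp.single [x, y] 1) (Finsupp.single [z] 1) =
      (f1 x z * f1 y z) • Finsupp.single [x, y, z] 1 +
        (f1 x z * f2 y z) • Finsupp.single [x, z, y] 1 + f2 x z • Finsupp.single [z, x, y] 1 := by
  rw [hrec x z [y] [], letter_mul_letter hcomm hunit hrec, hcomm, hunit]
  simp only [Finsupp.mapDomain_add, Finsupp.mapDomain_smul, Finsupp.mapDomain_single,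
    smul_add, smul_smul]

theorem letter_mul_pair (hcomm : ∀ x y, B x y = B y x)
    (hunit : ∀ x, B (Finsupp.single [] 1) x = x) (hrec : Recursion B f1 f2) (x y z : X) :
    B (Finsupp.single [x] 1) (Finsupp.single [y, z] 1) =
      f1 x y • Finsupp.single [x, y, z] 1 + (f2 x y * f1 x z) • Finsupp.single [y, x, z] 1 +
        (f2 x y * f2 x z) • Finsupp.single [y, z, x] 1 := by
  rw [hrec x y [] [z], hunit, letter_mul_letter hcomm hunit hrec]
  simp only [Finsupp.mapDomain_add, Finsupp.mapDomain_smul, Finsupp.mapDomain_single,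
    smul_add, smul_smul, add_assoc]

theorem mul_letters_assoc_coeff (hcomm : ∀ x y, B x y = B y x)
    (hassoc : ∀ x y z, B (B x y) z = B x (B y z))
    (hunit : ∀ x, B (Finsupp.single [] 1) x = x) (hrec : Recursion B f1 f2)
    {a b c : X} (hab : a ≠ b) (hbc : b ≠ c) (hac : a ≠ c) :
    f1 a b * f1 a c * f1 b c = f1 a b * f1 b c := by
  classical
  have key := congr($(hassoc (Finsupp.single [a] 1) (Finsupp.single [b] 1)
    (Finsupp.single [c] 1)) [a, b, c])
  simp only [letter_mul_letter hcomm hunit hrec, map_add, map_smul, LinearMap.add_apply,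
    LinearMap.smul_apply, pair_mul_letter hcomm hunit hrec,
    letter_mul_pair hcomm hunit hrec] at key
  simpa [Finsupp.single_apply, hab, hbc, hac, hab.symm, hbc.symm, hac.symm, mul_comm,
    mul_left_comm] using key

end WeakShuffle

theorem weakShuffle_triple_relation_general {K X : Type*} [Field K]
    (B : (List X →₀ K) →ₗ[K] (List X →₀ K) →ₗ[K] (List X →₀ K))
    (f1 f2 : X → X → K)
    (hcomm : ∀ x y, B x y = B y x)
    (hassoc : ∀ x y z, B (B x y) z = B x (B y z))
    (hunit : ∀ x, B (Finsupp.single [] 1) x = x)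
    (hrec : ∀ (a b : X) (u v : List X),
      B (Finsupp.single (a :: u) 1) (Finsupp.single (b :: v) 1) =
        f1 a b • Finsupp.mapDomain (a :: ·)
            (B (Finsupp.single u 1) (Finsupp.single (b :: v) 1)) +
        f2 a b • Finsupp.mapDomain (b :: ·)
            (B (Finsupp.single (a :: u) 1) (Finsupp.single v 1)))
    (a b c : X) (hab : a ≠ b) (hbc : b ≠ c) (hac : a ≠ c) :
    f1 a b * f1 b c * (f1 a c - 1) = 0 := by
  linear_combination WeakShuffle.mul_letters_assoc_coeff hcomm hassoc hunit hrec hab hbc hac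

/-- For a weak shuffle product with structure constants `f₁, f₂`, for any three
distinct letters `a, b, c`, one has `f₁(a⊗b)·f₁(b⊗c)·(f₁(a⊗c) − 1) = 0`. -/
theorem weakShuffle_triple_relation {K X : Type*} [Field K] [CharZero K]
    (B : (List X →₀ K) →ₗ[K] (List X →₀ K) →ₗ[K] (List X →₀ K))
    (f1 f2 : X → X → K)
    (hcomm : ∀ x y, B x y = B y x)
    (hassoc : ∀ x y z, B (B x y) z = B x (B y z))
    (hunit : ∀ x, B (Finsupp.single [] 1) x = x)
    (hrec : ∀ (a b : X) (u v : List X),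
      B (Finsupp.single (a :: u) 1) (Finsupp.single (b :: v) 1) =
        f1 a b • Finsupp.mapDomain (a :: ·)
            (B (Finsupp.single u 1) (Finsupp.single (b :: v) 1)) +
        f2 a b • Finsupp.mapDomain (b :: ·)
            (B (Finsupp.single (a :: u) 1) (Finsupp.single v 1)))
    (a b c : X) (hab : a ≠ b) (hbc : b ≠ c) (hac : a ≠ c) :
    f1 a b * f1 b c * (f1 a c - 1) = 0 :=
  weakShuffle_triple_relation_general B f1 f2 hcomm hassoc hunit hrec a b c hab hbc hac
end

section
/- For a weak shuffle product ☐ on K⟨X⟩, there exists at most one letter a ∈ X such that f₁(a⊗a) = 1 − f₂(a⊗a) with f₁(a⊗a) ∉ {0,1} or f₂(a⊗a) ≠ f₁(a⊗a); more precisely, if a ≠ b both satisfy f₁(a⊗a) = 1 − f₂(a⊗a) and f₁(b⊗b) = 1 − f₂(b⊗b) (and are not in the symmetric case), a contradiction arises since then f₁(a⊗b) = 1 = f₁(b⊗a) = 0. -/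
/-!
Comparing coefficients in the commutativity relations `[a]☐[b] = [b]☐[a]`, `[a,b]☐[a] = [a]☐[a,b]`
and `[b,a]☐[b] = [b]☐[b,a]` gives `f₁(a⊗b) = f₂(b⊗a) =: p`, `(f₁(a⊗a) - f₂(a⊗a))(p - 1) = 0` and
`(f₁(b⊗b) - f₂(b⊗b)) p = 0`. So `p = 1` as soon as `f₁(a⊗a) ≠ f₂(a⊗a)`, and `p = 0` as soon as
`f₁(b⊗b) ≠ f₂(b⊗b)`.
-/

open Finsupp

namespace WeakShuffle

variable {R X : Type*}

def SatisfiesRecursion [CommSemiring R] (B : (List X →₀ R) →ₗ[R] (List X →₀ R) →ₗ[R] (List X →₀ R))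
    (f1 f2 : X → X → R) : Prop :=
  ∀ (a b : X) (u v : List X),
    B (single (a :: u) 1) (single (b :: v) 1) =
      f1 a b • mapDomain (a :: ·) (B (single u 1) (single (b :: v) 1)) +
      f2 a b • mapDomain (b :: ·) (B (single (a :: u) 1) (single v 1))

section Expansion

variable [CommSemiring R] {B : (List X →₀ R) →ₗ[R] (List X →₀ R) →ₗ[R] (List X →₀ R)}
  {f1 f2 : X → X → R}

theorem mul_single_nil (hcomm : ∀ x y, B x y = B y x) (hunit : ∀ x, B (single [] 1) x = x)
    (u : List X) : B (single u 1) (single [] 1) = single u 1 :=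
  (hcomm _ _).trans (hunit _)

theorem mul_letter_letter (hrec : SatisfiesRecursion B f1 f2) (hcomm : ∀ x y, B x y = B y x)
    (hunit : ∀ x, B (single [] 1) x = x) (a b : X) :
    B (single [a] 1) (single [b] 1) = f1 a b • single [a, b] 1 + f2 a b • single [b, a] 1 := by
  rw [hrec a b [] [], hunit, mul_single_nil hcomm hunit, mapDomain_single, mapDomain_single]

theorem mul_letter_pair (hrec : SatisfiesRecursion B f1 f2) (hcomm : ∀ x y, B x y = B y x)
    (hunit : ∀ x, B (single [] 1) x = x) (a b c : X) :
    B (single [a] 1) (single [c, b] 1) =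
      f1 a c • single [a, c, b] 1 +
        f2 a c • (f1 a b • single [c, a, b] 1 + f2 a b • single [c, b, a] 1) := by
  rw [hrec a c [] [b], hunit, mul_letter_letter hrec hcomm hunit, mapDomain_single,
    mapDomain_add, mapDomain_smul, mapDomain_smul, mapDomain_single, mapDomain_single]

theorem mul_pair_letter (hrec : SatisfiesRecursion B f1 f2) (hcomm : ∀ x y, B x y = B y x)
    (hunit : ∀ x, B (single [] 1) x = x) (a b c : X) :
    B (single [c, b] 1) (single [a] 1) =
      f1 c a • (f1 b a • single [c, b, a] 1 + f2 b a • single [c, a, b] 1) +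
        f2 c a • single [a, c, b] 1 := by
  rw [hrec c a [b] [], mul_single_nil hcomm hunit, mul_letter_letter hrec hcomm hunit,
    mapDomain_single, mapDomain_add, mapDomain_smul, mapDomain_smul, mapDomain_single,
    mapDomain_single]

end Expansion

section Coefficients

variable [CommRing R] {B : (List X →₀ R) →ₗ[R] (List X →₀ R) →ₗ[R] (List X →₀ R)}
  {f1 f2 : X → X → R}

theorem f1_eq_f2_swap (hrec : SatisfiesRecursion B f1 f2) (hcomm : ∀ x y, B x y = B y x)
    (hunit : ∀ x, B (single [] 1) x = x) {a b : X} (hab : a ≠ b) : f1 a b = f2 b a := by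
  have h := DFunLike.congr_fun (hcomm (single [a] 1) (single [b] 1)) [a, b]
  rw [mul_letter_letter hrec hcomm hunit, mul_letter_letter hrec hcomm hunit] at h
  simpa [single_apply, hab, hab.symm] using h

theorem diag_sub_mul_f1_sub_one (hrec : SatisfiesRecursion B f1 f2)
    (hcomm : ∀ x y, B x y = B y x) (hunit : ∀ x, B (single [] 1) x = x) {a b : X}
    (hab : a ≠ b) : (f1 a a - f2 a a) * (f1 a b - 1) = 0 := by
  have h : f1 a a * f2 b a + f2 a a = f1 a a + f2 a a * f1 a b := by
    have := DFunLike.congr_fun (hcomm (single [a, b] 1) (single [a] 1)) [a, a, b]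
    rw [mul_pair_letter hrec hcomm hunit, mul_letter_pair hrec hcomm hunit] at this
    simpa [hab, hab.symm] using this
  rw [← f1_eq_f2_swap hrec hcomm hunit hab] at h
  linear_combination h

theorem diag_sub_mul_f1 (hrec : SatisfiesRecursion B f1 f2) (hcomm : ∀ x y, B x y = B y x)
    (hunit : ∀ x, B (single [] 1) x = x) {a b : X} (hab : a ≠ b) :
    (f1 b b - f2 b b) * f1 a b = 0 := by
  have h : f1 b b * f1 a b = f2 b b * f2 b a := by
    have := DFunLike.congr_fun (hcomm (single [b, a] 1) (single [b] 1)) [b, a, b]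
    rw [mul_pair_letter hrec hcomm hunit, mul_letter_pair hrec hcomm hunit] at this
    simpa [hab, hab.symm] using this
  rw [← f1_eq_f2_swap hrec hcomm hunit hab] at h
  linear_combination h

variable [NoZeroDivisors R]

theorem f1_eq_one_of_diag_ne (hrec : SatisfiesRecursion B f1 f2)
    (hcomm : ∀ x y, B x y = B y x) (hunit : ∀ x, B (single [] 1) x = x) {a b : X}
    (hab : a ≠ b) (ha : f1 a a ≠ f2 a a) : f1 a b = 1 :=
  sub_eq_zero.1 <| (mul_eq_zero.1 (diag_sub_mul_f1_sub_one hrec hcomm hunit hab)).resolve_left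
    (sub_ne_zero.2 ha)

theorem f1_eq_zero_of_diag_ne (hrec : SatisfiesRecursion B f1 f2)
    (hcomm : ∀ x y, B x y = B y x) (hunit : ∀ x, B (single [] 1) x = x) {a b : X}
    (hab : a ≠ b) (hb : f1 b b ≠ f2 b b) : f1 a b = 0 :=
  (mul_eq_zero.1 (diag_sub_mul_f1 hrec hcomm hunit hab)).resolve_left (sub_ne_zero.2 hb)

end Coefficients

end WeakShuffle

open WeakShuffle in
theorem weakShuffle_at_most_one_asymmetric_general {K X : Type*} [Field K]
    (B : (List X →₀ K) →ₗ[K] (List X →₀ K) →ₗ[K] (List X →₀ K))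
    (f1 f2 : X → X → K)
    (hcomm : ∀ x y, B x y = B y x)
    (hunit : ∀ x, B (Finsupp.single [] 1) x = x)
    (hrec : ∀ (a b : X) (u v : List X),
      B (Finsupp.single (a :: u) 1) (Finsupp.single (b :: v) 1) =
        f1 a b • Finsupp.mapDomain (a :: ·)
            (B (Finsupp.single u 1) (Finsupp.single (b :: v) 1)) +
        f2 a b • Finsupp.mapDomain (b :: ·)
            (B (Finsupp.single (a :: u) 1) (Finsupp.single v 1)))
    (a b : X) (hab : a ≠ b) :
    ¬ (f1 a a = 1 - f2 a a ∧ f1 a a ≠ f2 a a ∧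
         f1 b b = 1 - f2 b b ∧ f1 b b ≠ f2 b b) := by
  rintro ⟨-, ha, -, hb⟩
  have hone := f1_eq_one_of_diag_ne hrec hcomm hunit hab ha
  have hzero := f1_eq_zero_of_diag_ne hrec hcomm hunit hab hb
  exact one_ne_zero (hone.symm.trans hzero)

/-- For a weak shuffle product, at most one letter can be in the asymmetric case
`f₁(a⊗a) = 1 − f₂(a⊗a)` with `f₁(a⊗a) ≠ f₂(a⊗a)`: two distinct such letters
`a, b` yield a contradiction. -/
theorem weakShuffle_at_most_one_asymmetric {K X : Type*} [Field K] [CharZero K]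
    (B : (List X →₀ K) →ₗ[K] (List X →₀ K) →ₗ[K] (List X →₀ K))
    (f1 f2 : X → X → K)
    (hcomm : ∀ x y, B x y = B y x)
    (hassoc : ∀ x y z, B (B x y) z = B x (B y z))
    (hunit : ∀ x, B (Finsupp.single [] 1) x = x)
    (hrec : ∀ (a b : X) (u v : List X),
      B (Finsupp.single (a :: u) 1) (Finsupp.single (b :: v) 1) =
        f1 a b • Finsupp.mapDomain (a :: ·)
            (B (Finsupp.single u 1) (Finsupp.single (b :: v) 1)) +
        f2 a b • Finsupp.mapDomain (b :: ·)
            (B (Finsupp.single (a :: u) 1) (Finsupp.single v 1)))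
    (a b : X) (hab : a ≠ b) :
    ¬ (f1 a a = 1 - f2 a a ∧ f1 a a ≠ f2 a a ∧
         f1 b b = 1 - f2 b b ∧ f1 b b ≠ f2 b b) :=
  weakShuffle_at_most_one_asymmetric_general B f1 f2 hcomm hunit hrec a b hab
end

section
/- Let X = {a, b} and let ☐ be the weak shuffle product with f₁(a⊗b) = 1, f₁(b⊗a) = 0, f₁(a⊗a) = f₂(a⊗a) = 0, f₁(b⊗b) = f₂(b⊗b) = 0 (case C₂ with k = 1). Then for nonempty words u, v: u ☐ v = u·v if u = a^n and v begins with b; u ☐ v = v·u if v = a^n and u begins with b; and u ☐ v = 0 in all other cases. -/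
/-! With these constants (`a = true`, `b = false`), `(x·u) ☐ (y·v)` vanishes when `x = y` and
otherwise is `a` times the product with that leading `a` removed from its factor. So the product
peels `a`'s off the fronts of the factors and never removes a `b`: it survives only if a factor is
used up before the leading letters agree, which happens exactly when one factor is `a^n` and the
other starts with `b`. -/

/-- The weak shuffle product on words over a two-letter alphabet (here `Bool`,
with `a := true` and `b := false`) determined by structure constants
`f₁, f₂ : X → X → K`. -/
noncomputable def wshuffle {K : Type*} [Field K] (f1 f2 : Bool → Bool → K) :
    List Bool → List Bool → (List Bool →₀ K)
  | [], v => Finsupp.single v 1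
  | u, [] => Finsupp.single u 1
  | x :: u, y :: v =>
      f1 x y • Finsupp.mapDomain (x :: ·) (wshuffle f1 f2 u (y :: v)) +
      f2 x y • Finsupp.mapDomain (y :: ·) (wshuffle f1 f2 (x :: u) v)
termination_by u v => u.length + v.length
decreasing_by all_goals (simp; try omega)

open Finsupp List

lemma List.false_mem_of_not_exists_eq_replicate_true {w : List Bool}
    (h : ¬ ∃ n, w = replicate n true) : false ∈ w := by
  by_contra hw
  exact h ⟨w.length, eq_replicate_iff.2 ⟨rfl, fun b hb => by cases b <;> simp_all⟩⟩

section
variable {K : Type*} [Field K] {f1 f2 : Bool → Bool → K}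

lemma wshuffle_cons_self_cons_self (x : Bool) (u v : List Bool)
    (hf1 : f1 x x = 0) (hf2 : f2 x x = 0) : wshuffle f1 f2 (x :: u) (x :: v) = 0 := by
  rw [wshuffle, hf1, hf2, zero_smul, zero_smul, add_zero]

lemma wshuffle_true_cons_false_cons (u v : List Bool)
    (hf1 : f1 true false = 1) (hf2 : f2 true false = 0) :
    wshuffle f1 f2 (true :: u) (false :: v) =
      mapDomain (true :: ·) (wshuffle f1 f2 u (false :: v)) := by
  rw [wshuffle, hf1, hf2, one_smul, zero_smul, add_zero]

lemma wshuffle_false_cons_true_cons (u v : List Bool)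
    (hf1 : f1 false true = 0) (hf2 : f2 false true = 1) :
    wshuffle f1 f2 (false :: u) (true :: v) =
      mapDomain (true :: ·) (wshuffle f1 f2 (false :: u) v) := by
  rw [wshuffle, hf1, hf2, one_smul, zero_smul, zero_add]

lemma wshuffle_replicate_true_false_cons (n : ℕ) (v : List Bool)
    (hf1 : f1 true false = 1) (hf2 : f2 true false = 0) :
    wshuffle f1 f2 (replicate n true) (false :: v) = single (replicate n true ++ false :: v) 1 := by
  induction n with
  | zero => rw [replicate_zero, wshuffle, nil_append]
  | succ n ih =>
    rw [replicate_succ, wshuffle_true_cons_false_cons _ _ hf1 hf2, ih, mapDomain_single,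
      cons_append]

lemma wshuffle_false_cons_replicate_true (n : ℕ) (u : List Bool)
    (hf1 : f1 false true = 0) (hf2 : f2 false true = 1) :
    wshuffle f1 f2 (false :: u) (replicate n true) = single (replicate n true ++ false :: u) 1 := by
  induction n with
  | zero => rw [replicate_zero, wshuffle.eq_2 _ _ _ (cons_ne_nil _ _), nil_append]
  | succ n ih =>
    rw [replicate_succ, wshuffle_false_cons_true_cons _ _ hf1 hf2, ih, mapDomain_single,
      cons_append]

lemma wshuffle_eq_zero_of_false_mem {u v : List Bool} (hu : false ∈ u) (hv : false ∈ v)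
    (htf : f2 true false = 0) (hft : f1 false true = 0)
    (htt : f1 true true = 0) (htt' : f2 true true = 0)
    (hff : f1 false false = 0) (hff' : f2 false false = 0) :
    wshuffle f1 f2 u v = 0 := by
  induction u, v using wshuffle.induct with
  | case1 v => simp at hu
  | case2 u _ => simp at hv
  | case3 x u y v ih₁ ih₂ =>
    rw [wshuffle]
    cases x <;> cases y
    · simp [hff, hff']
    · rw [hft, ih₂ hu (by simpa using hv)]
      simp
    · rw [htf, ih₁ (by simpa using hu) hv]
      simp
    · simp [htt, htt']

end

theorem wshuffle_C2_description_general {K : Type*} [Field K]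
    (f1 f2 : Bool → Bool → K)
    (h1 : f1 true false = 1) (h2 : f2 false true = 1)
    (h3 : f1 false true = 0) (h4 : f2 true false = 0)
    (h5 : f1 true true = 0) (h6 : f2 true true = 0)
    (h7 : f1 false false = 0) (h8 : f2 false false = 0)
    (u v : List Bool) (hu : u ≠ []) (hv : v ≠ []) :
    ((∃ n : ℕ, u = List.replicate n true) → v.head? = some false →
        wshuffle f1 f2 u v = Finsupp.single (u ++ v) 1) ∧
    ((∃ n : ℕ, v = List.replicate n true) → u.head? = some false →
        wshuffle f1 f2 u v = Finsupp.single (v ++ u) 1) ∧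
    (¬ ((∃ n : ℕ, u = List.replicate n true) ∧ v.head? = some false) →
     ¬ ((∃ n : ℕ, v = List.replicate n true) ∧ u.head? = some false) →
        wshuffle f1 f2 u v = 0) := by
  refine ⟨?_, ?_, fun hleft hright => ?_⟩
  · rintro ⟨n, rfl⟩ hv'
    obtain ⟨v', rfl⟩ := head?_eq_some_iff.1 hv'
    exact wshuffle_replicate_true_false_cons n v' h1 h4
  · rintro ⟨n, rfl⟩ hu'
    obtain ⟨u', rfl⟩ := head?_eq_some_iff.1 hu'
    exact wshuffle_false_cons_replicate_true n u' h3 h2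
  obtain ⟨x, u', rfl⟩ := exists_cons_of_ne_nil hu
  obtain ⟨y, v', rfl⟩ := exists_cons_of_ne_nil hv
  cases x <;> cases y
  · exact wshuffle_cons_self_cons_self false u' v' h7 h8
  · have hv_false := false_mem_of_not_exists_eq_replicate_true fun h => hright ⟨h, rfl⟩
    exact wshuffle_eq_zero_of_false_mem mem_cons_self hv_false h4 h3 h5 h6 h7 h8
  · have hu_false := false_mem_of_not_exists_eq_replicate_true fun h => hleft ⟨h, rfl⟩
    exact wshuffle_eq_zero_of_false_mem hu_false mem_cons_self h4 h3 h5 h6 h7 h8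
  · exact wshuffle_cons_self_cons_self true u' v' h5 h6

/-- Case `C₂` (with `k = 1`) on `X = {a, b}` (`a := true`, `b := false`):
`f₁(a⊗b) = 1` and all other structure constants vanish.  For nonempty words
`u, v`: `u ☐ v = u·v` if `u = a^n` and `v` begins with `b`; `u ☐ v = v·u` if
`v = a^n` and `u` begins with `b`; and `u ☐ v = 0` otherwise. -/
theorem wshuffle_C2_description {K : Type*} [Field K] [CharZero K]
    (f1 f2 : Bool → Bool → K)
    (h1 : f1 true false = 1) (h2 : f2 false true = 1)
    (h3 : f1 false true = 0) (h4 : f2 true false = 0)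
    (h5 : f1 true true = 0) (h6 : f2 true true = 0)
    (h7 : f1 false false = 0) (h8 : f2 false false = 0)
    (u v : List Bool) (hu : u ≠ []) (hv : v ≠ []) :
    ((∃ n : ℕ, u = List.replicate n true) → v.head? = some false →
        wshuffle f1 f2 u v = Finsupp.single (u ++ v) 1) ∧
    ((∃ n : ℕ, v = List.replicate n true) → u.head? = some false →
        wshuffle f1 f2 u v = Finsupp.single (v ++ u) 1) ∧
    (¬ ((∃ n : ℕ, u = List.replicate n true) ∧ v.head? = some false) →
     ¬ ((∃ n : ℕ, v = List.replicate n true) ∧ u.head? = some false) →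
        wshuffle f1 f2 u v = 0) :=
  wshuffle_C2_description_general f1 f2 h1 h2 h3 h4 h5 h6 h7 h8 u v hu hv
end

section
/- Let ☐ be a weak shuffle product on K⟨X⟩ such that f₁(a⊗a) ∈ {0,1} for every letter a. Define au ≺ bv = f₁(a⊗b)·a·(u ☐ bv) and au ≻ bv = f₂(a⊗b)·b·(au ☐ v). Then (K⟨X⟩, ≺, ≻) is a dendriform algebra: for all x, y, z in the augmentation ideal, (x ≺ y) ≺ z = x ≺ (y ≺ z + y ≻ z), (x ≻ y) ≺ z = x ≻ (y ≺ z), and (x ≺ y + x ≻ y) ≻ z = x ≻ (y ≻ z). -/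
/-!
On nonempty words `☐ = ≺ + ≻`, so associativity of `☐` says that the three dendriform defects
add up to zero, and the middle one vanishes outright by associativity. For words `au`, `bv`,
`cw` the left defect consists of words beginning with `a`, the right one of words beginning with
`c`; so both vanish when `a ≠ c`. When `a = c`, the left defect is an explicit combination whose
two coefficients vanish by the relations that commutativity (on two letters), associativity (on
the letters `a, a, b`) and `f₁(a⊗a) ∈ {0,1}` force on `f₁`, `f₂`.
-/

/-- The left half-product `≺` of a weak shuffle product `B` with structure
constant `f₁`: `au ≺ bv = f₁(a⊗b)·a·(u ☐ bv)` (and `0` if an argument is the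
empty word). -/
noncomputable def precP {K X : Type*} [Field K]
    (B : (List X →₀ K) →ₗ[K] (List X →₀ K) →ₗ[K] (List X →₀ K))
    (f1 : X → X → K) : List X → List X → (List X →₀ K)
  | a :: u, b :: v =>
      f1 a b • Finsupp.mapDomain (a :: ·)
        (B (Finsupp.single u 1) (Finsupp.single (b :: v) 1))
  | _, _ => 0

/-- The right half-product `≻` of a weak shuffle product `B` with structure
constant `f₂`: `au ≻ bv = f₂(a⊗b)·b·(au ☐ v)`. -/
noncomputable def succP {K X : Type*} [Field K]
    (B : (List X →₀ K) →ₗ[K] (List X →₀ K) →ₗ[K] (List X →₀ K))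
    (f2 : X → X → K) : List X → List X → (List X →₀ K)
  | a :: u, b :: v =>
      f2 a b • Finsupp.mapDomain (b :: ·)
        (B (Finsupp.single (a :: u) 1) (Finsupp.single v 1))
  | _, _ => 0

open Finsupp

section Bilinear

variable {R α β M : Type*} [CommSemiring R] [AddCommMonoid M] [Module R M]

theorem Finsupp.apply₂_mem_of_mem_supported (F : (α →₀ R) →ₗ[R] (β →₀ R) →ₗ[R] M)
    {S : Set α} {T : Set β} {N : Submodule R M}
    (h : ∀ t ∈ S, ∀ s ∈ T, F (single t 1) (single s 1) ∈ N)
    {x : α →₀ R} (hx : x ∈ supported R R S) {z : β →₀ R} (hz : z ∈ supported R R T) :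
    F x z ∈ N := by
  have hle : Submodule.map₂ F (supported R R S) (supported R R T) ≤ N := by
    rw [supported_eq_span_single, supported_eq_span_single, Submodule.map₂_span_span,
      Submodule.span_le]
    rintro _ ⟨_, ⟨t, ht, rfl⟩, _, ⟨s, hs, rfl⟩, rfl⟩
    exact h t ht s hs
  exact hle (Submodule.apply_mem_map₂ F hx hz)

theorem Finsupp.apply₂_eq_of_eqOn_supported (F G : (α →₀ R) →ₗ[R] (β →₀ R) →ₗ[R] M)
    {S : Set α} {T : Set β}
    (h : ∀ t ∈ S, ∀ s ∈ T, F (single t 1) (single s 1) = G (single t 1) (single s 1))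
    {x : α →₀ R} (hx : x ∈ supported R R S) {z : β →₀ R} (hz : z ∈ supported R R T) :
    F x z = G x z := by
  rw [supported_eq_span_single] at hx hz
  have hS : ∀ t ∈ S, F (single t 1) z = G (single t 1) z := fun t ht =>
    LinearMap.eqOn_span' (by rintro _ ⟨s, hs, rfl⟩; exact h t ht s hs) hz
  exact LinearMap.eqOn_span' (f := F.flip z) (g := G.flip z)
    (by rintro _ ⟨t, ht, rfl⟩; exact hS t ht) hx

noncomputable def Finsupp.linearCombination₂ (g : α → β → M) : (α →₀ R) →ₗ[R] (β →₀ R) →ₗ[R] M :=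
  linearCombination R fun a => linearCombination R (g a)

variable (g : α → β → M)

@[simp]
theorem Finsupp.linearCombination₂_single_single (a : α) (b : β) :
    linearCombination₂ (R := R) g (single a 1) (single b 1) = g a b := by
  simp [linearCombination₂]

theorem Finsupp.linearCombination₂_apply_single (x : α →₀ R) (b : β) :
    linearCombination₂ g x (single b 1) = x.sum fun a c => c • g a b := by
  simp [linearCombination₂, linearCombination_apply, LinearMap.finsupp_sum_apply]

theorem Finsupp.linearCombination₂_single_apply (a : α) (z : β →₀ R) :
    linearCombination₂ g (single a 1) z = z.sum fun b c => c • g a b := by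
  simp [linearCombination₂, linearCombination_apply]

end Bilinear

namespace WeakShuffle

variable {K X : Type*} [Field K]
  (B : (List X →₀ K) →ₗ[K] (List X →₀ K) →ₗ[K] (List X →₀ K)) (f1 f2 : X → X → K)

noncomputable def prec : (List X →₀ K) →ₗ[K] (List X →₀ K) →ₗ[K] (List X →₀ K) :=
  linearCombination₂ (precP B f1)

noncomputable def succ : (List X →₀ K) →ₗ[K] (List X →₀ K) →ₗ[K] (List X →₀ K) :=
  linearCombination₂ (succP B f2)

@[simp]
theorem prec_single_single (u v : List X) :
    prec B f1 (single u 1) (single v 1) = precP B f1 u v :=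
  linearCombination₂_single_single _ u v

@[simp]
theorem succ_single_single (u v : List X) :
    succ B f2 (single u 1) (single v 1) = succP B f2 u v :=
  linearCombination₂_single_single _ u v

theorem prec_single_cons_single_cons (a b : X) (u v : List X) :
    prec B f1 (single (a :: u) 1) (single (b :: v) 1) =
      f1 a b • mapDomain (a :: ·) (B (single u 1) (single (b :: v) 1)) :=
  prec_single_single B f1 _ _

theorem prec_apply_single (x : List X →₀ K) (w : List X) :
    prec B f1 x (single w 1) = x.sum fun t c => c • precP B f1 t w :=
  linearCombination₂_apply_single _ x w

theorem prec_single_apply (u : List X) (z : List X →₀ K) :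
    prec B f1 (single u 1) z = z.sum fun t c => c • precP B f1 u t :=
  linearCombination₂_single_apply _ u z

theorem succ_apply_single (x : List X →₀ K) (w : List X) :
    succ B f2 x (single w 1) = x.sum fun t c => c • succP B f2 t w :=
  linearCombination₂_apply_single _ x w

theorem succ_single_apply (u : List X) (z : List X →₀ K) :
    succ B f2 (single u 1) z = z.sum fun t c => c • succP B f2 u t :=
  linearCombination₂_single_apply _ u z

theorem prec_mapDomain_cons_single (a c : X) (w : List X) (y : List X →₀ K) :
    prec B f1 (mapDomain (a :: ·) y) (single (c :: w) 1) =
      f1 a c • mapDomain (a :: ·) (B y (single (c :: w) 1)) := by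
  induction y using Finsupp.induction_linear with
  | zero => simp
  | add y z hy hz => simp only [mapDomain_add, map_add, LinearMap.add_apply, hy, hz, smul_add]
  | single t k =>
    rw [← smul_single_one t k, mapDomain_smul, mapDomain_single, map_smul, map_smul,
      LinearMap.smul_apply, LinearMap.smul_apply, prec_single_single, mapDomain_smul,
      smul_comm (f1 a c) k]
    rfl

theorem prec_single_mapDomain_cons (a b : X) (u : List X) (y : List X →₀ K) :
    prec B f1 (single (a :: u) 1) (mapDomain (b :: ·) y) =
      f1 a b • mapDomain (a :: ·) (B (single u 1) (mapDomain (b :: ·) y)) := by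
  induction y using Finsupp.induction_linear with
  | zero => simp
  | add y z hy hz => simp only [mapDomain_add, map_add, hy, hz, smul_add]
  | single t k =>
    rw [← smul_single_one t k, mapDomain_smul, mapDomain_single, map_smul, map_smul,
      prec_single_single, mapDomain_smul, smul_comm (f1 a b) k]
    rfl

theorem succ_single_mapDomain_cons (a b : X) (u : List X) (y : List X →₀ K) :
    succ B f2 (single (a :: u) 1) (mapDomain (b :: ·) y) =
      f2 a b • mapDomain (b :: ·) (B (single (a :: u) 1) y) := by
  induction y using Finsupp.induction_linear with
  | zero => simp
  | add y z hy hz => simp only [mapDomain_add, map_add, hy, hz, smul_add]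
  | single t k =>
    rw [← smul_single_one t k, mapDomain_smul, mapDomain_single, map_smul, map_smul,
      succ_single_single, mapDomain_smul, smul_comm (f2 a b) k]
    rfl

variable (K) in
def augIdeal : Submodule K (List X →₀ K) := supported K K {w | w ≠ []}

variable (K) in
def startsWith (a : X) : Submodule K (List X →₀ K) := supported K K {w | w.head? = some a}

theorem mapDomain_cons_mem_startsWith (a : X) (y : List X →₀ K) :
    mapDomain (a :: ·) y ∈ startsWith K a := by
  classical
  intro w hw
  obtain ⟨t, -, rfl⟩ := Finset.mem_image.1 (mapDomain_support hw)
  rfl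

theorem startsWith_le_augIdeal (a : X) : startsWith K a ≤ augIdeal K :=
  supported_mono fun w (hw : w.head? = some a) h => by simp [h] at hw

theorem disjoint_startsWith {a c : X} (hac : a ≠ c) :
    Disjoint (startsWith K a) (startsWith K c) :=
  disjoint_supported_supported <| Set.disjoint_left.2 fun w ha hc => hac <|
    Option.some_injective _ ((ha : w.head? = _).symm.trans hc)

theorem precP_cons_mem_startsWith (a : X) (u v : List X) :
    precP B f1 (a :: u) v ∈ startsWith K a := by
  cases v with
  | nil => exact zero_mem _
  | cons b v => exact Submodule.smul_mem _ _ (mapDomain_cons_mem_startsWith a _)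

theorem succP_cons_mem_startsWith (c : X) (u w : List X) :
    succP B f2 u (c :: w) ∈ startsWith K c := by
  cases u with
  | nil => exact zero_mem _
  | cons a u => exact Submodule.smul_mem _ _ (mapDomain_cons_mem_startsWith c _)

theorem prec_mem_augIdeal (x y : List X →₀ K) : prec B f1 x y ∈ augIdeal K := by
  refine apply₂_mem_of_mem_supported _ (S := Set.univ) (T := Set.univ) (fun u _ v _ => ?_)
    (by simp) (by simp)
  rw [prec_single_single]
  cases u with
  | nil => exact zero_mem _
  | cons a u => exact startsWith_le_augIdeal a (precP_cons_mem_startsWith B f1 a u v)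

theorem succ_mem_startsWith {c : X} (x : List X →₀ K) {z : List X →₀ K}
    (hz : z ∈ startsWith K c) : succ B f2 x z ∈ startsWith K c := by
  refine apply₂_mem_of_mem_supported _ (S := Set.univ) (fun u _ w (hw : w.head? = some c) => ?_)
    (by simp) hz
  obtain ⟨w, rfl⟩ : ∃ w', w = c :: w' := by
    cases w with
    | nil => cases hw
    | cons c' w => cases hw; exact ⟨w, rfl⟩
  rw [succ_single_single]
  exact succP_cons_mem_startsWith B f2 c u w

theorem succ_mem_augIdeal (x y : List X →₀ K) : succ B f2 x y ∈ augIdeal K := by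
  refine apply₂_mem_of_mem_supported _ (S := Set.univ) (T := Set.univ) (fun u _ v _ => ?_)
    (by simp) (by simp)
  rw [succ_single_single]
  cases v with
  | nil => cases u <;> exact zero_mem _
  | cons c w => exact startsWith_le_augIdeal c (succP_cons_mem_startsWith B f2 c u w)

noncomputable def leftDefect (x y z : List X →₀ K) : List X →₀ K :=
  prec B f1 (prec B f1 x y) z - prec B f1 x (prec B f1 y z + succ B f2 y z)

noncomputable def middleDefect (x y z : List X →₀ K) : List X →₀ K :=
  prec B f1 (succ B f2 x y) z - succ B f2 x (prec B f1 y z)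

noncomputable def rightDefect (x y z : List X →₀ K) : List X →₀ K :=
  succ B f2 (prec B f1 x y + succ B f2 x y) z - succ B f2 x (succ B f2 y z)

theorem rightDefect_mem_startsWith (x y : List X →₀ K) (c : X) (w : List X) :
    rightDefect B f1 f2 x y (single (c :: w) 1) ∈ startsWith K c := by
  have hw : single (c :: w) (1 : K) ∈ startsWith K c := single_mem_supported K 1 rfl
  exact sub_mem (succ_mem_startsWith B f2 _ hw)
    (succ_mem_startsWith B f2 _ (succ_mem_startsWith B f2 _ hw))

theorem middleDefect_single_cons_eq_zero
    (hassoc : ∀ x y z, B (B x y) z = B x (B y z)) (a b c : X) (u v w : List X) :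
    middleDefect B f1 f2 (single (a :: u) 1) (single (b :: v) 1) (single (c :: w) 1) = 0 := by
  rw [middleDefect, sub_eq_zero, ← mapDomain_single (f := (b :: ·)),
    succ_single_mapDomain_cons, map_smul, LinearMap.smul_apply, prec_mapDomain_cons_single,
    prec_mapDomain_cons_single, map_smul,
    succ_single_mapDomain_cons, hassoc, smul_comm]

section Recursion

variable (hrec : ∀ (a b : X) (u v : List X),
  B (single (a :: u) 1) (single (b :: v) 1) =
    f1 a b • mapDomain (a :: ·) (B (single u 1) (single (b :: v) 1)) +
    f2 a b • mapDomain (b :: ·) (B (single (a :: u) 1) (single v 1)))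
include hrec

theorem eq_prec_add_succ {x y : List X →₀ K} (hx : x ∈ augIdeal K) (hy : y ∈ augIdeal K) :
    B x y = prec B f1 x y + succ B f2 x y := by
  rw [← LinearMap.add_apply (prec B f1 x), ← LinearMap.add_apply (prec B f1)]
  refine apply₂_eq_of_eqOn_supported _ _ ?_ hx hy
  rintro (_ | ⟨a, u⟩) hu (_ | ⟨b, v⟩) hv
  · exact absurd rfl hu
  · exact absurd rfl hu
  · exact absurd rfl hv
  · rw [LinearMap.add_apply, LinearMap.add_apply, prec_single_single, succ_single_single, hrec]
    rfl

theorem leftDefect_add_middleDefect_add_rightDefect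
    (hassoc : ∀ x y z, B (B x y) z = B x (B y z))
    {x y z : List X →₀ K} (hx : x ∈ augIdeal K) (hy : y ∈ augIdeal K) (hz : z ∈ augIdeal K) :
    leftDefect B f1 f2 x y z + middleDefect B f1 f2 x y z + rightDefect B f1 f2 x y z = 0 := by
  have hxy := add_mem (prec_mem_augIdeal B f1 x y) (succ_mem_augIdeal B f2 x y)
  have hyz := add_mem (prec_mem_augIdeal B f1 y z) (succ_mem_augIdeal B f2 y z)
  have h := hassoc x y z
  rw [eq_prec_add_succ B f1 f2 hrec hx hy, eq_prec_add_succ B f1 f2 hrec hy hz,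
    eq_prec_add_succ B f1 f2 hrec hxy hz, eq_prec_add_succ B f1 f2 hrec hx hyz,
    map_add (prec B f1 x), map_add (succ B f2 x), map_add, LinearMap.add_apply] at h
  rw [leftDefect, middleDefect, rightDefect, map_add (prec B f1 x)]
  linear_combination (norm := abel) h

theorem leftDefect_single_cons (hassoc : ∀ x y z, B (B x y) z = B x (B y z))
    (a b c : X) (u v w : List X) :
    leftDefect B f1 f2 (single (a :: u) 1) (single (b :: v) 1) (single (c :: w) 1) =
      mapDomain (a :: ·)
        ((f1 a b * f1 b c * (f1 a c - 1)) •
            B (single u 1) (mapDomain (b :: ·) (B (single v 1) (single (c :: w) 1))) +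
          (f1 a c * f2 b c * (f1 a b - 1)) •
            B (single u 1) (mapDomain (c :: ·) (B (single (b :: v) 1) (single w 1)))) := by
  have hv : single (b :: v) (1 : K) ∈ augIdeal K := single_mem_supported K 1 (List.cons_ne_nil b v)
  have hw : single (c :: w) (1 : K) ∈ augIdeal K := single_mem_supported K 1 (List.cons_ne_nil c w)
  rw [leftDefect, ← eq_prec_add_succ B f1 f2 hrec hv hw, prec_single_cons_single_cons, map_smul,
    LinearMap.smul_apply, prec_mapDomain_cons_single, hassoc, hrec b c v w,
    map_add (prec B f1 _), map_smul (prec B f1 _), map_smul (prec B f1 _),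
    prec_single_mapDomain_cons, prec_single_mapDomain_cons]
  simp only [map_add, map_smul, mapDomain_add, mapDomain_smul]
  module

theorem leftDefect_single_cons_eq_zero_of_ne (hassoc : ∀ x y z, B (B x y) z = B x (B y z))
    {a c : X} (hac : a ≠ c) (b : X) (u v w : List X) :
    leftDefect B f1 f2 (single (a :: u) 1) (single (b :: v) 1) (single (c :: w) 1) = 0 := by
  have hsum := leftDefect_add_middleDefect_add_rightDefect B f1 f2 hrec hassoc
    (single_mem_supported K 1 (List.cons_ne_nil a u))
    (single_mem_supported K 1 (List.cons_ne_nil b v))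
    (single_mem_supported K 1 (List.cons_ne_nil c w))
  rw [middleDefect_single_cons_eq_zero B f1 f2 hassoc, add_zero, add_eq_zero_iff_eq_neg] at hsum
  have ha : leftDefect B f1 f2 (single (a :: u) 1) (single (b :: v) 1) (single (c :: w) 1) ∈
      startsWith K a := by
    rw [leftDefect_single_cons B f1 f2 hrec hassoc]
    exact mapDomain_cons_mem_startsWith a _
  have hc := hsum ▸ neg_mem (rightDefect_mem_startsWith B f1 f2 _ _ c w)
  exact Submodule.disjoint_def.1 (disjoint_startsWith hac) _ ha hc

section Commutative

variable (hcomm : ∀ x y, B x y = B y x) (hunit : ∀ x, B (single [] 1) x = x)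
include hcomm hunit

theorem single_letter_mul_single_letter (a b : X) :
    B (single [a] 1) (single [b] 1) = f1 a b • single [a, b] 1 + f2 a b • single [b, a] 1 := by
  rw [hrec, hunit, hcomm, hunit, mapDomain_single, mapDomain_single]

theorem coeff_swap_of_ne {a b : X} (hab : a ≠ b) : f2 b a = f1 a b ∧ f1 b a = f2 a b := by
  have h := hcomm (single [a] 1) (single [b] 1)
  rw [single_letter_mul_single_letter B f1 f2 hrec hcomm hunit,
    single_letter_mul_single_letter B f1 f2 hrec hcomm hunit] at h
  constructor
  · simpa [single_apply, hab, hab.symm] using (DFunLike.congr_fun h [a, b]).symm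
  · simpa [single_apply, hab, hab.symm] using (DFunLike.congr_fun h [b, a]).symm

theorem coeff_relations_of_ne (hassoc : ∀ x y z, B (B x y) z = B x (B y z)) {a b : X}
    (hab : a ≠ b) :
    f1 a a * f1 a b * (f1 a b - 1) = 0 ∧ f1 a b * f2 a b * (f1 a a - 1) = 0 := by
  -- the left defect of the one-letter words `a`, `a`, `b` is `c₁ • aab + c₂ • aba`, where `c₁`
  -- and `c₂` are the two products in the claim
  have h := leftDefect_single_cons_eq_zero_of_ne B f1 f2 hrec hassoc hab a [] [] []
  rw [leftDefect_single_cons B f1 f2 hrec hassoc] at h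
  simp only [hunit, hcomm _ (single [] 1), mapDomain_single, mapDomain_add, mapDomain_smul] at h
  constructor
  · simpa [single_apply, hab, hab.symm] using DFunLike.congr_fun h [a, a, b]
  · simpa [single_apply, hab, hab.symm] using DFunLike.congr_fun h [a, b, a]

theorem leftDefect_coeffs_eq_zero_of_first_eq_last
    (hassoc : ∀ x y z, B (B x y) z = B x (B y z)) (hdiag : ∀ a : X, f1 a a = 0 ∨ f1 a a = 1)
    (a b : X) :
    f1 a b * f1 b a * (f1 a a - 1) = 0 ∧ f1 a a * f2 b a * (f1 a b - 1) = 0 := by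
  rcases eq_or_ne a b with rfl | hab
  · rcases hdiag a with h | h <;> simp [h]
  · obtain ⟨h21, h12⟩ := coeff_swap_of_ne B f1 f2 hrec hcomm hunit hab
    obtain ⟨h1, h2⟩ := coeff_relations_of_ne B f1 f2 hrec hcomm hunit hassoc hab
    rw [h21, h12]
    exact ⟨by linear_combination h2, by linear_combination h1⟩

theorem leftDefect_single_cons_eq_zero (hassoc : ∀ x y z, B (B x y) z = B x (B y z))
    (hdiag : ∀ a : X, f1 a a = 0 ∨ f1 a a = 1) (a b c : X) (u v w : List X) :
    leftDefect B f1 f2 (single (a :: u) 1) (single (b :: v) 1) (single (c :: w) 1) = 0 := by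
  rcases eq_or_ne a c with rfl | hac
  · obtain ⟨h1, h2⟩ :=
      leftDefect_coeffs_eq_zero_of_first_eq_last B f1 f2 hrec hcomm hunit hassoc hdiag a b
    rw [leftDefect_single_cons B f1 f2 hrec hassoc, h1, h2, zero_smul, zero_smul, add_zero,
      mapDomain_zero]
  · exact leftDefect_single_cons_eq_zero_of_ne B f1 f2 hrec hassoc hac b u v w

end Commutative

end Recursion

end WeakShuffle

open WeakShuffle in
theorem weakShuffle_dendriform_general {K X : Type*} [Field K]
    (B : (List X →₀ K) →ₗ[K] (List X →₀ K) →ₗ[K] (List X →₀ K))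
    (f1 f2 : X → X → K)
    (hcomm : ∀ x y, B x y = B y x)
    (hassoc : ∀ x y z, B (B x y) z = B x (B y z))
    (hunit : ∀ x, B (Finsupp.single [] 1) x = x)
    (hrec : ∀ (a b : X) (u v : List X),
      B (Finsupp.single (a :: u) 1) (Finsupp.single (b :: v) 1) =
        f1 a b • Finsupp.mapDomain (a :: ·)
            (B (Finsupp.single u 1) (Finsupp.single (b :: v) 1)) +
        f2 a b • Finsupp.mapDomain (b :: ·)
            (B (Finsupp.single (a :: u) 1) (Finsupp.single v 1)))
    (hdiag : ∀ a : X, f1 a a = 0 ∨ f1 a a = 1)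
    (u v w : List X) (hu : u ≠ []) (hv : v ≠ []) (hw : w ≠ []) :
    ((precP B f1 u v).sum (fun t c => c • precP B f1 t w) =
        (precP B f1 v w + succP B f2 v w).sum (fun t c => c • precP B f1 u t)) ∧
    ((succP B f2 u v).sum (fun t c => c • precP B f1 t w) =
        (precP B f1 v w).sum (fun t c => c • succP B f2 u t)) ∧
    ((precP B f1 u v + succP B f2 u v).sum (fun t c => c • succP B f2 t w) =
        (succP B f2 v w).sum (fun t c => c • succP B f2 u t)) := by
  obtain ⟨a, u, rfl⟩ := List.exists_cons_of_ne_nil hu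
  obtain ⟨b, v, rfl⟩ := List.exists_cons_of_ne_nil hv
  obtain ⟨c, w, rfl⟩ := List.exists_cons_of_ne_nil hw
  have hleft := leftDefect_single_cons_eq_zero B f1 f2 hrec hcomm hunit hassoc hdiag a b c u v w
  have hmiddle := middleDefect_single_cons_eq_zero B f1 f2 hassoc a b c u v w
  have hsum := leftDefect_add_middleDefect_add_rightDefect B f1 f2 hrec hassoc
    (single_mem_supported K 1 hu) (single_mem_supported K 1 hv) (single_mem_supported K 1 hw)
  rw [hleft, hmiddle, zero_add, zero_add] at hsum
  rw [leftDefect, sub_eq_zero, prec_single_single, prec_single_single, succ_single_single,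
    prec_apply_single, prec_single_apply] at hleft
  rw [middleDefect, sub_eq_zero, succ_single_single, prec_single_single, prec_apply_single,
    succ_single_apply] at hmiddle
  rw [rightDefect, sub_eq_zero, prec_single_single, succ_single_single, succ_single_single,
    succ_apply_single, succ_single_apply] at hsum
  exact ⟨hleft, hmiddle, hsum⟩

/-- If `☐` is a weak shuffle product with `f₁(a⊗a) ∈ {0,1}` for every letter,
then the half-products `≺, ≻` make `K⟨X⟩` (on nonempty words) into a
dendriform algebra. -/
theorem weakShuffle_dendriform {K X : Type*} [Field K] [CharZero K]
    (B : (List X →₀ K) →ₗ[K] (List X →₀ K) →ₗ[K] (List X →₀ K))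
    (f1 f2 : X → X → K)
    (hcomm : ∀ x y, B x y = B y x)
    (hassoc : ∀ x y z, B (B x y) z = B x (B y z))
    (hunit : ∀ x, B (Finsupp.single [] 1) x = x)
    (hrec : ∀ (a b : X) (u v : List X),
      B (Finsupp.single (a :: u) 1) (Finsupp.single (b :: v) 1) =
        f1 a b • Finsupp.mapDomain (a :: ·)
            (B (Finsupp.single u 1) (Finsupp.single (b :: v) 1)) +
        f2 a b • Finsupp.mapDomain (b :: ·)
            (B (Finsupp.single (a :: u) 1) (Finsupp.single v 1)))
    (hdiag : ∀ a : X, f1 a a = 0 ∨ f1 a a = 1)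
    (u v w : List X) (hu : u ≠ []) (hv : v ≠ []) (hw : w ≠ []) :
    ((precP B f1 u v).sum (fun t c => c • precP B f1 t w) =
        (precP B f1 v w + succP B f2 v w).sum (fun t c => c • precP B f1 u t)) ∧
    ((succP B f2 u v).sum (fun t c => c • precP B f1 t w) =
        (precP B f1 v w).sum (fun t c => c • succP B f2 u t)) ∧
    ((precP B f1 u v + succP B f2 u v).sum (fun t c => c • succP B f2 t w) =
        (succP B f2 v w).sum (fun t c => c • succP B f2 u t)) :=
  weakShuffle_dendriform_general B f1 f2 hcomm hassoc hunit hrec hdiag u v w hu hv hw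
end

section
/- Let ☐ be a weak stuffle product on K⟨X⟩, i.e. an associative commutative bilinear product with (a·u) ☐ (b·v) = f₁(a⊗b)·a·(u ☐ (b·v)) + f₂(a⊗b)·b·((a·u) ☐ v) + f₃(a⊗b)·(u ☐ v), where f₃ : K·X ⊗ K·X → K·X. Then f₃ is commutative and associative: f₃(x⊗y) = f₃(y⊗x) and f₃(f₃(x⊗y)⊗z) = f₃(x⊗f₃(y⊗z)) for all letters x, y, z. -/
/-!
Restricted to letters, the recursion gives `[x] ☐ [y] = f₁ x y·[x,y] + f₂ x y·[y,x] + f₃ x y`,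
so `f₃ x y` is the length-one part of `[x] ☐ [y]`, and commutativity of `☐` makes `f₃` commutative.
The recursion also shows that a two-letter word times a letter has no length-one part, so the
length-one part of `([x] ☐ [y]) ☐ [z]` is `f₃ (f₃ x y) z`. Associativity and commutativity of `☐`
identify this triple product with `([y] ☐ [z]) ☐ [x]`, whose length-one part is `f₃ (f₃ y z) x`.
-/

open Finsupp

namespace WeakStuffle

theorem mapDomain_eq_sum_smul_single_one {R α β : Type*} [Semiring R] (f : α → β) (g : α →₀ R) :
    mapDomain f g = g.sum fun a c => c • single (f a) 1 := by
  simp only [smul_single_one]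
  rfl

variable {K X : Type*}

section Semiring

variable [Semiring K]

noncomputable def letterPart : (List X →₀ K) →ₗ[K] (X →₀ K) :=
  lcomapDomain (fun t => [t]) List.singleton_injective

theorem letterPart_apply (g : List X →₀ K) (w : X) : letterPart g w = g [w] := rfl

theorem letterPart_mapDomain_singleton (g : X →₀ K) :
    letterPart (mapDomain (fun t => [t]) g) = g :=
  leftInverse_lcomapDomain_mapDomain _ _ g

theorem letterPart_single_of_length_ne_one {u : List X} (hu : u.length ≠ 1) (c : K) :
    letterPart (single u c) = 0 := by
  ext w
  rw [letterPart_apply, single_eq_of_ne]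
  · rfl
  · rintro rfl
    exact hu rfl

theorem letterPart_mapDomain_cons (a : X) (g : List X →₀ K) :
    letterPart (mapDomain (a :: ·) g) = single a (g []) := by
  classical
  ext w
  rw [letterPart_apply, single_apply]
  split_ifs with hw
  · rw [← hw, mapDomain_apply List.cons_injective]
  · refine mapDomain_of_notMem_range _ _ ?_
    rintro ⟨l, hl⟩
    exact hw (List.cons.inj hl).1

end Semiring

variable [CommSemiring K]

def StuffleRecursion (B : (List X →₀ K) →ₗ[K] (List X →₀ K) →ₗ[K] (List X →₀ K))
    (f1 f2 : X → X → K) (f3 : X → X → (X →₀ K)) : Prop :=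
  ∀ (a b : X) (u v : List X),
    B (single (a :: u) 1) (single (b :: v) 1) =
      f1 a b • mapDomain (a :: ·) (B (single u 1) (single (b :: v) 1)) +
      f2 a b • mapDomain (b :: ·) (B (single (a :: u) 1) (single v 1)) +
      (f3 a b).sum (fun x c => c • mapDomain (x :: ·) (B (single u 1) (single v 1)))

variable {B : (List X →₀ K) →ₗ[K] (List X →₀ K) →ₗ[K] (List X →₀ K)}
  {f1 f2 : X → X → K} {f3 : X → X → (X →₀ K)}

theorem mul_single_nil (hcomm : ∀ x y, B x y = B y x)
    (hunit : ∀ x, B (single [] 1) x = x)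
    (u : List X →₀ K) : B u (single [] 1) = u := by
  rw [hcomm, hunit]

theorem letter_mul_letter (hcomm : ∀ x y, B x y = B y x)
    (hunit : ∀ x, B (single [] 1) x = x)
    (hrec : StuffleRecursion B f1 f2 f3) (x y : X) :
    B (single [x] 1) (single [y] 1) =
      f1 x y • single [x, y] 1 + f2 x y • single [y, x] 1 + mapDomain (fun t => [t]) (f3 x y) := by
  have h := hrec x y [] []
  simp only [hunit, mul_single_nil hcomm hunit, mapDomain_single, smul_single_one] at h ⊢
  exact h

theorem letter_mul_letter_apply_nil (hcomm : ∀ x y, B x y = B y x)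
    (hunit : ∀ x, B (single [] 1) x = x)
    (hrec : StuffleRecursion B f1 f2 f3) (x y : X) :
    B (single [x] 1) (single [y] 1) [] = 0 := by
  simp [letter_mul_letter hcomm hunit hrec,
    mapDomain_of_notMem_range _ _ (show [] ∉ Set.range fun t : X => [t] by simp)]

theorem letterPart_letter_mul_letter (hcomm : ∀ x y, B x y = B y x)
    (hunit : ∀ x, B (single [] 1) x = x)
    (hrec : StuffleRecursion B f1 f2 f3) (x y : X) :
    letterPart (B (single [x] 1) (single [y] 1)) = f3 x y := by
  simp [letter_mul_letter hcomm hunit hrec, letterPart_single_of_length_ne_one,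
    letterPart_mapDomain_singleton]

theorem f3_comm (hcomm : ∀ x y, B x y = B y x)
    (hunit : ∀ x, B (single [] 1) x = x)
    (hrec : StuffleRecursion B f1 f2 f3) (x y : X) : f3 x y = f3 y x := by
  rw [← letterPart_letter_mul_letter hcomm hunit hrec,
    ← letterPart_letter_mul_letter hcomm hunit hrec, hcomm]

theorem letterPart_pair_mul_letter (hcomm : ∀ x y, B x y = B y x)
    (hunit : ∀ x, B (single [] 1) x = x)
    (hrec : StuffleRecursion B f1 f2 f3) (a b z : X) :
    letterPart (B (single [a, b] 1) (single [z] 1)) = 0 := by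
  rw [hrec a z [b] [], mul_single_nil hcomm hunit, mul_single_nil hcomm hunit]
  simp only [map_add, map_smul, map_finsuppSum, letterPart_mapDomain_cons,
    letter_mul_letter_apply_nil hcomm hunit hrec]
  simp

theorem letterPart_letter_mul_letter_mul_letter (hcomm : ∀ x y, B x y = B y x)
    (hunit : ∀ x, B (single [] 1) x = x)
    (hrec : StuffleRecursion B f1 f2 f3) (x y z : X) :
    letterPart (B (B (single [x] 1) (single [y] 1)) (single [z] 1)) =
      (f3 x y).sum (fun t c => c • f3 t z) := by
  rw [letter_mul_letter hcomm hunit hrec x y, mapDomain_eq_sum_smul_single_one]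
  simp only [map_add, map_smul, map_finsuppSum, LinearMap.add_apply, LinearMap.smul_apply,
    LinearMap.finsupp_sum_apply, letterPart_pair_mul_letter hcomm hunit hrec,
    letterPart_letter_mul_letter hcomm hunit hrec, smul_zero, zero_add]

end WeakStuffle

open WeakStuffle in
theorem weakStuffle_f3_comm_assoc_general {K X : Type*} [Field K]
    (B : (List X →₀ K) →ₗ[K] (List X →₀ K) →ₗ[K] (List X →₀ K))
    (f1 f2 : X → X → K) (f3 : X → X → (X →₀ K))
    (hcomm : ∀ x y, B x y = B y x)
    (hassoc : ∀ x y z, B (B x y) z = B x (B y z))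
    (hunit : ∀ x, B (Finsupp.single [] 1) x = x)
    (hrec : ∀ (a b : X) (u v : List X),
      B (Finsupp.single (a :: u) 1) (Finsupp.single (b :: v) 1) =
        f1 a b • Finsupp.mapDomain (a :: ·)
            (B (Finsupp.single u 1) (Finsupp.single (b :: v) 1)) +
        f2 a b • Finsupp.mapDomain (b :: ·)
            (B (Finsupp.single (a :: u) 1) (Finsupp.single v 1)) +
        (f3 a b).sum (fun x c => c • Finsupp.mapDomain (x :: ·)
            (B (Finsupp.single u 1) (Finsupp.single v 1))))
 :
    (∀ x y : X, f3 x y = f3 y x) ∧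
    (∀ x y z : X,
      (f3 x y).sum (fun t c => c • f3 t z) =
        (f3 y z).sum (fun t c => c • f3 x t)) := by
  refine ⟨f3_comm hcomm hunit hrec, fun x y z => ?_⟩
  calc (f3 x y).sum (fun t c => c • f3 t z)
      = letterPart (B (B (single [x] 1) (single [y] 1)) (single [z] 1)) :=
        (letterPart_letter_mul_letter_mul_letter hcomm hunit hrec x y z).symm
    _ = letterPart (B (B (single [y] 1) (single [z] 1)) (single [x] 1)) := by rw [hassoc, hcomm]
    _ = (f3 y z).sum (fun t c => c • f3 t x) :=
        letterPart_letter_mul_letter_mul_letter hcomm hunit hrec y z x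
    _ = (f3 y z).sum (fun t c => c • f3 x t) := by simp only [f3_comm hcomm hunit hrec _ x]

/-- For a weak stuffle product with contracting part `f₃ : K·X ⊗ K·X → K·X`, the
map `f₃` is commutative and associative. -/
theorem weakStuffle_f3_comm_assoc {K X : Type*} [Field K] [CharZero K] [Countable X]
    (B : (List X →₀ K) →ₗ[K] (List X →₀ K) →ₗ[K] (List X →₀ K))
    (f1 f2 : X → X → K) (f3 : X → X → (X →₀ K))
    (hcomm : ∀ x y, B x y = B y x)
    (hassoc : ∀ x y z, B (B x y) z = B x (B y z))
    (hunit : ∀ x, B (Finsupp.single [] 1) x = x)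
    (hrec : ∀ (a b : X) (u v : List X),
      B (Finsupp.single (a :: u) 1) (Finsupp.single (b :: v) 1) =
        f1 a b • Finsupp.mapDomain (a :: ·)
            (B (Finsupp.single u 1) (Finsupp.single (b :: v) 1)) +
        f2 a b • Finsupp.mapDomain (b :: ·)
            (B (Finsupp.single (a :: u) 1) (Finsupp.single v 1)) +
        (f3 a b).sum (fun x c => c • Finsupp.mapDomain (x :: ·)
            (B (Finsupp.single u 1) (Finsupp.single v 1))))
 :
    (∀ x y : X, f3 x y = f3 y x) ∧
    (∀ x y z : X,
      (f3 x y).sum (fun t c => c • f3 t z) =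
        (f3 y z).sum (fun t c => c • f3 x t)) :=
  weakStuffle_f3_comm_assoc_general B f1 f2 f3 hcomm hassoc hunit hrec
end

section
/- Let ☐ be a weak stuffle product on K⟨X⟩ and a a letter with f₃(a⊗a) ≠ 0. Then f₁(a⊗a) = f₂(a⊗a) ∈ {0, 1}. -/
/-!
Write `λ = f₁(a⊗a)` and pick a letter `x` with `f₃(a⊗a)(x) ≠ 0`. Comparing the coefficients of
`a x` in `[a] ☐ [a a]` and `[a a] ☐ [a]` gives `f₁(a⊗a) = f₂(a⊗a)`. The rest comes from the
associativity `([a] ☐ [a]) ☐ r = [a] ☐ ([a] ☐ r)`, read at well-chosen words. With `r = [a a]`: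
at `a a a a` it gives `λ²(λ - 1)(4λ² - 1) = 0` whatever `f₃` is; if `x = a`, at `a a a` it gives
`λ(λ - 1)(2λ² + 3λ - 1) f₃(a⊗a)(a) = 0`, which rules out `λ = ±1/2`. If `x ≠ a`, reading it at
`x x` gives `f₂(a⊗x) = λ`, and with `r = [x]` at `x a a` it gives `2λ f₂(a⊗x)(f₂(a⊗x) - 1) = 0`.
-/

open Finsupp (single mapDomain)

theorem Finsupp.mapDomain_finsuppSum {α β γ M N : Type*} [AddCommMonoid M] [Zero N] (f : α → β)
    (s : γ →₀ N) (v : γ → N → α →₀ M) :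
    mapDomain f (s.sum v) = s.sum fun a b => mapDomain f (v a b) :=
  map_finsuppSum (mapDomain.addMonoidHom f) _ _

theorem Finsupp.mapDomain_cons_apply_cons {M X : Type*} [AddCommMonoid M] [DecidableEq X]
    (a y : X) (p : List X →₀ M) (t : List X) :
    mapDomain (a :: ·) p (y :: t) = if y = a then p t else 0 := by
  split_ifs with h
  · subst h
    exact mapDomain_apply List.cons_injective p t
  · exact mapDomain_of_notMem_range _ _
      (by rintro ⟨l, hl⟩; exact h (List.cons_eq_cons.mp hl).1.symm)

theorem Finsupp.sum_smul_mapDomain_cons_apply_cons {R X : Type*} [Semiring R] [DecidableEq X]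
    (g : X →₀ R) (p : List X →₀ R) (y : X) (t : List X) :
    (g.sum fun x c => c • mapDomain (x :: ·) p) (y :: t) = g y * p t := by
  simp +contextual [sum_apply, mapDomain_cons_apply_cons]

def StuffleRecursion {R X : Type*} [CommSemiring R]
    (B : (List X →₀ R) →ₗ[R] (List X →₀ R) →ₗ[R] (List X →₀ R))
    (f1 f2 : X → X → R) (f3 : X → X → X →₀ R) : Prop :=
  ∀ (a b : X) (u v : List X),
    B (single (a :: u) 1) (single (b :: v) 1) =
      f1 a b • mapDomain (a :: ·) (B (single u 1) (single (b :: v) 1)) +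
      f2 a b • mapDomain (b :: ·) (B (single (a :: u) 1) (single v 1)) +
      (f3 a b).sum fun x c => c • mapDomain (x :: ·) (B (single u 1) (single v 1))

namespace StuffleRecursion

section CommSemiring

variable {R X : Type*} [CommSemiring R]
  {B : (List X →₀ R) →ₗ[R] (List X →₀ R) →ₗ[R] (List X →₀ R)}
  {f1 f2 : X → X → R} {f3 : X → X → X →₀ R}

theorem apply_cons [DecidableEq X] (hrec : StuffleRecursion B f1 f2 f3)
    (a b y : X) (u v t : List X) :
    B (single (a :: u) 1) (single (b :: v) 1) (y :: t) =
      f1 a b * (if y = a then B (single u 1) (single (b :: v) 1) t else 0) +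
      f2 a b * (if y = b then B (single (a :: u) 1) (single v 1) t else 0) +
      f3 a b y * B (single u 1) (single v 1) t := by
  simp only [hrec a b u v, Finsupp.add_apply, Finsupp.smul_apply, smul_eq_mul,
    Finsupp.mapDomain_cons_apply_cons, Finsupp.sum_smul_mapDomain_cons_apply_cons]

theorem singleton_singleton (hrec : StuffleRecursion B f1 f2 f3)
    (hunit : ∀ p, B (single [] 1) p = p) (hunit' : ∀ p, B p (single [] 1) = p) (a b : X) :
    B (single [a] 1) (single [b] 1) =
      f1 a b • single [a, b] 1 + f2 a b • single [b, a] 1 +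
        (f3 a b).sum fun y c => c • single [y] 1 := by
  simp only [hrec a b [] [], hunit, hunit', Finsupp.mapDomain_single]

theorem singleton_pair (hrec : StuffleRecursion B f1 f2 f3)
    (hunit : ∀ p, B (single [] 1) p = p) (hunit' : ∀ p, B p (single [] 1) = p) (a b c : X) :
    B (single [a] 1) (single [b, c] 1) =
      f1 a b • single [a, b, c] 1 +
      f2 a b • (f1 a c • single [b, a, c] 1 + f2 a c • single [b, c, a] 1 +
        (f3 a c).sum fun y d => d • single [b, y] 1) +
      (f3 a b).sum fun y d => d • single [y, c] 1 := by
  rw [hrec a b [] [c], hrec.singleton_singleton hunit hunit']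
  simp only [hunit, Finsupp.mapDomain_single, Finsupp.mapDomain_add,
    Finsupp.mapDomain_smul, Finsupp.mapDomain_finsuppSum]

theorem singleton_singleton_mul_apply (hrec : StuffleRecursion B f1 f2 f3)
    (hunit : ∀ p, B (single [] 1) p = p) (hunit' : ∀ p, B p (single [] 1) = p)
    (a b : X) (r : List X →₀ R) (w : List X) :
    B (B (single [a] 1) (single [b] 1)) r w =
      f1 a b * B (single [a, b] 1) r w + f2 a b * B (single [b, a] 1) r w +
        (f3 a b).sum fun y c => c * B (single [y] 1) r w := by
  simp only [hrec.singleton_singleton hunit hunit', map_add, map_smul, map_finsuppSum,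
    LinearMap.add_apply, LinearMap.smul_apply, LinearMap.finsupp_sum_apply, Finsupp.add_apply,
    Finsupp.smul_apply, smul_eq_mul, Finsupp.sum_apply]

theorem mul_singleton_singleton_apply (hrec : StuffleRecursion B f1 f2 f3)
    (hunit : ∀ p, B (single [] 1) p = p) (hunit' : ∀ p, B p (single [] 1) = p)
    (r : List X →₀ R) (a b : X) (w : List X) :
    B r (B (single [a] 1) (single [b] 1)) w =
      f1 a b * B r (single [a, b] 1) w + f2 a b * B r (single [b, a] 1) w +
        (f3 a b).sum fun y c => c * B r (single [y] 1) w := by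
  simp only [hrec.singleton_singleton hunit hunit', map_add, map_smul, map_finsuppSum,
    Finsupp.add_apply, Finsupp.smul_apply, smul_eq_mul, Finsupp.sum_apply]

theorem mul_singleton_pair_apply (hrec : StuffleRecursion B f1 f2 f3)
    (hunit : ∀ p, B (single [] 1) p = p) (hunit' : ∀ p, B p (single [] 1) = p)
    (r : List X →₀ R) (a b c : X) (w : List X) :
    B r (B (single [a] 1) (single [b, c] 1)) w =
      f1 a b * B r (single [a, b, c] 1) w +
      f2 a b * (f1 a c * B r (single [b, a, c] 1) w + f2 a c * B r (single [b, c, a] 1) w +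
        (f3 a c).sum fun y d => d * B r (single [b, y] 1) w) +
      (f3 a b).sum fun y d => d * B r (single [y, c] 1) w := by
  simp only [hrec.singleton_pair hunit hunit', map_add, map_smul, map_finsuppSum,
    Finsupp.add_apply, Finsupp.smul_apply, smul_eq_mul, Finsupp.sum_apply]

end CommSemiring

section CommRing

variable {R X : Type*} [CommRing R] [DecidableEq X]
  {B : (List X →₀ R) →ₗ[R] (List X →₀ R) →ₗ[R] (List X →₀ R)}
  {f1 f2 : X → X → R} {f3 : X → X → X →₀ R}

theorem f1_diag_eq_f2_diag [IsDomain R] (hrec : StuffleRecursion B f1 f2 f3)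
    (hcomm : ∀ p q, B p q = B q p) (hunit : ∀ p, B (single [] 1) p = p) {a x : X}
    (hx : f3 a a x ≠ 0) :
    f1 a a = f2 a a := by
  have hunit' : ∀ p, B p (single [] 1) = p := fun p => (hcomm _ _).trans (hunit p)
  have h := congr($(hcomm (single [a] 1) (single [a, a] 1)) [a, x])
  simp [hrec.apply_cons, hunit, hunit', Finsupp.single_apply] at h
  exact (h.resolve_right hx).symm

theorem relation_top_degree (hrec : StuffleRecursion B f1 f2 f3)
    (hassoc : ∀ p q r, B (B p q) r = B p (B q r))
    (hunit : ∀ p, B (single [] 1) p = p) (hunit' : ∀ p, B p (single [] 1) = p)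
    (a : X) (h12 : f1 a a = f2 a a) :
    f1 a a ^ 2 * (f1 a a - 1) * (2 * f1 a a - 1) * (2 * f1 a a + 1) = 0 := by
  have h := congr($(hassoc (single [a] 1) (single [a] 1) (single [a, a] 1)) [a, a, a, a])
  rw [hrec.singleton_singleton_mul_apply hunit hunit',
    hrec.mul_singleton_pair_apply hunit hunit'] at h
  simp [hrec.apply_cons, hunit, hunit'] at h
  rw [← h12] at h
  linear_combination -h

theorem relation_diag [IsDomain R] (hrec : StuffleRecursion B f1 f2 f3)
    (hassoc : ∀ p q r, B (B p q) r = B p (B q r))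
    (hunit : ∀ p, B (single [] 1) p = p) (hunit' : ∀ p, B p (single [] 1) = p)
    {a : X} (ha : f3 a a a ≠ 0) (h12 : f1 a a = f2 a a) :
    f1 a a * (f1 a a - 1) * (2 * f1 a a ^ 2 + 3 * f1 a a - 1) = 0 := by
  have h := congr($(hassoc (single [a] 1) (single [a] 1) (single [a, a] 1)) [a, a, a])
  rw [hrec.singleton_singleton_mul_apply hunit hunit',
    hrec.mul_singleton_pair_apply hunit hunit'] at h
  simp [hrec.apply_cons, hunit, hunit', Finsupp.single_apply, mul_add, mul_ite,
    Finsupp.sum_add, ha] at h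
  rw [← h12] at h
  refine mul_right_cancel₀ ha ?_
  linear_combination -h

theorem f2_eq_f1_diag [IsDomain R] (hrec : StuffleRecursion B f1 f2 f3)
    (hassoc : ∀ p q r, B (B p q) r = B p (B q r))
    (hunit : ∀ p, B (single [] 1) p = p) (hunit' : ∀ p, B p (single [] 1) = p)
    {a x : X} (hxa : x ≠ a) (hx : f3 a a x ≠ 0) (h12 : f1 a a = f2 a a) :
    f2 a x = f1 a a := by
  have h := congr($(hassoc (single [a] 1) (single [a] 1) (single [a, a] 1)) [x, x])
  rw [hrec.singleton_singleton_mul_apply hunit hunit',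
    hrec.mul_singleton_pair_apply hunit hunit'] at h
  simp [hrec.apply_cons, hunit, Finsupp.single_apply, hxa, mul_ite, hx] at h
  rw [← h12] at h
  refine mul_right_cancel₀ (pow_ne_zero 2 hx) ?_
  linear_combination -h

theorem relation_off_diag (hrec : StuffleRecursion B f1 f2 f3)
    (hassoc : ∀ p q r, B (B p q) r = B p (B q r))
    (hunit : ∀ p, B (single [] 1) p = p) (hunit' : ∀ p, B p (single [] 1) = p)
    {a x : X} (hxa : x ≠ a) (h12 : f1 a a = f2 a a) :
    2 * f1 a a * f2 a x * (f2 a x - 1) = 0 := by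
  have h := congr($(hassoc (single [a] 1) (single [a] 1) (single [x] 1)) [x, a, a])
  rw [hrec.singleton_singleton_mul_apply hunit hunit',
    hrec.mul_singleton_singleton_apply hunit hunit'] at h
  simp [hrec.apply_cons, hunit, hunit', hxa, hxa.symm] at h
  rw [← h12] at h
  linear_combination -h

end CommRing

end StuffleRecursion

theorem eq_zero_or_eq_one_of_relations {R : Type*} [CommRing R] [IsDomain R] (h2 : (2 : R) ≠ 0)
    {l : R} (htop : l ^ 2 * (l - 1) * (2 * l - 1) * (2 * l + 1) = 0)
    (hdiag : l * (l - 1) * (2 * l ^ 2 + 3 * l - 1) = 0) :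
    l = 0 ∨ l = 1 := by
  rcases mul_eq_zero.mp hdiag with h | hq
  · simpa [sub_eq_zero] using h
  simp only [mul_eq_zero, pow_eq_zero_iff, ne_eq, OfNat.ofNat_ne_zero, not_false_eq_true,
    sub_eq_zero] at htop
  rcases htop with ((h | h) | h) | h
  · exact Or.inl h
  · exact Or.inr h
  · exact absurd (by linear_combination hq - (l + 2) * h) (one_ne_zero (α := R))
  · exact absurd (by linear_combination (-1 : R) * hq + (l + 1) * h) h2

theorem weakStuffle_f3_diag_ne_zero_general {K X : Type*} [Field K] [CharZero K]
    (B : (List X →₀ K) →ₗ[K] (List X →₀ K) →ₗ[K] (List X →₀ K))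
    (f1 f2 : X → X → K) (f3 : X → X → (X →₀ K))
    (hcomm : ∀ x y, B x y = B y x)
    (hassoc : ∀ x y z, B (B x y) z = B x (B y z))
    (hunit : ∀ x, B (Finsupp.single [] 1) x = x)
    (hrec : ∀ (a b : X) (u v : List X),
      B (Finsupp.single (a :: u) 1) (Finsupp.single (b :: v) 1) =
        f1 a b • Finsupp.mapDomain (a :: ·)
            (B (Finsupp.single u 1) (Finsupp.single (b :: v) 1)) +
        f2 a b • Finsupp.mapDomain (b :: ·)
            (B (Finsupp.single (a :: u) 1) (Finsupp.single v 1)) +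
        (f3 a b).sum (fun x c => c • Finsupp.mapDomain (x :: ·)
            (B (Finsupp.single u 1) (Finsupp.single v 1))))
    (a : X) (ha : f3 a a ≠ 0) :
    f1 a a = f2 a a ∧ (f1 a a = 0 ∨ f1 a a = 1) := by
  classical
  have hrec : StuffleRecursion B f1 f2 f3 := hrec
  have hunit' : ∀ p, B p (single [] 1) = p := fun p => (hcomm _ _).trans (hunit p)
  obtain ⟨x, hx⟩ : ∃ x, f3 a a x ≠ 0 := Finsupp.ne_iff.mp ha
  have h12 := hrec.f1_diag_eq_f2_diag hcomm hunit hx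
  refine ⟨h12, ?_⟩
  rcases eq_or_ne x a with rfl | hxa
  · exact eq_zero_or_eq_one_of_relations two_ne_zero
      (hrec.relation_top_degree hassoc hunit hunit' x h12)
      (hrec.relation_diag hassoc hunit hunit' hx h12)
  · have h := hrec.relation_off_diag hassoc hunit hunit' hxa h12
    rw [hrec.f2_eq_f1_diag hassoc hunit hunit' hxa hx h12] at h
    simpa [sub_eq_zero] using h

/-- For a weak stuffle product, if `f₃(a⊗a) ≠ 0` for a letter `a`, then
`f₁(a⊗a) = f₂(a⊗a) ∈ {0, 1}`. -/
theorem weakStuffle_f3_diag_ne_zero {K X : Type*} [Field K] [CharZero K] [Countable X]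
    (B : (List X →₀ K) →ₗ[K] (List X →₀ K) →ₗ[K] (List X →₀ K))
    (f1 f2 : X → X → K) (f3 : X → X → (X →₀ K))
    (hcomm : ∀ x y, B x y = B y x)
    (hassoc : ∀ x y z, B (B x y) z = B x (B y z))
    (hunit : ∀ x, B (Finsupp.single [] 1) x = x)
    (hrec : ∀ (a b : X) (u v : List X),
      B (Finsupp.single (a :: u) 1) (Finsupp.single (b :: v) 1) =
        f1 a b • Finsupp.mapDomain (a :: ·)
            (B (Finsupp.single u 1) (Finsupp.single (b :: v) 1)) +
        f2 a b • Finsupp.mapDomain (b :: ·)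
            (B (Finsupp.single (a :: u) 1) (Finsupp.single v 1)) +
        (f3 a b).sum (fun x c => c • Finsupp.mapDomain (x :: ·)
            (B (Finsupp.single u 1) (Finsupp.single v 1))))
    (a : X) (ha : f3 a a ≠ 0) :
    f1 a a = f2 a a ∧ (f1 a a = 0 ∨ f1 a a = 1) :=
  weakStuffle_f3_diag_ne_zero_general B f1 f2 f3 hcomm hassoc hunit hrec a ha
end

section
/- Let X = {x₁, x₂, ...} be an infinite alphabet and ☐ a weak stuffle product on K⟨X⟩ such that f₃(xᵢ⊗xⱼ) is a nonzero scalar multiple of x_{i+j} for all positive integers i, j. Then the underlying weak shuffle structure constants satisfy either f₁ ≡ 0 and f₂ ≡ 0, or f₁(a⊗b) = f₂(a⊗b) = 1 for all letters a, b. -/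
/-!
Compare coefficients of single words in `x_a ☐ (x_b ☐ x_d) = (x_a ☐ x_b) ☐ x_d` and in
`x_a ☐ x_b = x_b ☐ x_a`, cancelling the nonzero scalars of `f₃` wherever they appear. For
distinct letters this shows that `f₁(x_a ⊗ x_b) = f₂(x_b ⊗ x_a)` depends only on `b`, and that
`μ b := f₁(x_{b+1} ⊗ x_b)` satisfies `μ (b + 1) = μ b * μ 1` and `μ 1 ^ 3 * (μ 1 - 1) = 0`;
so all off-diagonal values equal `t := μ 1 ∈ {0, 1}`. On the diagonal, commutativity of
`x_a ☐ x_a x_b` forces `f₁(x_a ⊗ x_a) = f₂(x_a ⊗ x_a)`, and the coefficient of `x_{a+b} x_a` in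
`(x_a ☐ x_a) ☐ x_b` forces their sum to be `2t`, so both equal `t` since `2 ≠ 0` in `K`.
-/

open Finsupp

namespace PNat

@[simp] theorem add_ne_left (a b : ℕ+) : a + b ≠ a := (lt_add_right a b).ne'
@[simp] theorem add_ne_right (a b : ℕ+) : a + b ≠ b := (lt_add_left b a).ne'
@[simp] theorem left_ne_add (a b : ℕ+) : a ≠ a + b := (lt_add_right a b).ne

end PNat

section

variable {K : Type*} [Field K]

/-- A weak stuffle product on words over `ℕ+` whose `f₃(x_a ⊗ x_b)` is `c a b • x_{a+b}`. -/
structure IsGradedWeakStuffle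
    (B : (List ℕ+ →₀ K) →ₗ[K] (List ℕ+ →₀ K) →ₗ[K] (List ℕ+ →₀ K))
    (f1 f2 c : ℕ+ → ℕ+ → K) : Prop where
  comm : ∀ x y, B x y = B y x
  assoc : ∀ x y z, B (B x y) z = B x (B y z)
  nil_mul : ∀ x, B (single [] 1) x = x
  cons_mul_cons : ∀ (a b : ℕ+) (u v : List ℕ+),
    B (single (a :: u) 1) (single (b :: v) 1) =
      f1 a b • mapDomain (a :: ·) (B (single u 1) (single (b :: v) 1)) +
      f2 a b • mapDomain (b :: ·) (B (single (a :: u) 1) (single v 1)) +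
      c a b • mapDomain ((a + b) :: ·) (B (single u 1) (single v 1))

namespace IsGradedWeakStuffle

variable {B : (List ℕ+ →₀ K) →ₗ[K] (List ℕ+ →₀ K) →ₗ[K] (List ℕ+ →₀ K)}
  {f1 f2 c : ℕ+ → ℕ+ → K} (h : IsGradedWeakStuffle B f1 f2 c)
include h

theorem mul_nil (x : List ℕ+ →₀ K) : B x (single [] 1) = x := by
  rw [h.comm, h.nil_mul]

theorem letter_mul_letter (a b : ℕ+) :
    B (single [a] 1) (single [b] 1) =
      f1 a b • single [a, b] 1 + f2 a b • single [b, a] 1 + c a b • single [a + b] 1 := by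
  rw [h.cons_mul_cons, h.nil_mul, h.mul_nil, h.nil_mul]
  simp only [mapDomain_single]

theorem pair_mul_letter (a b d : ℕ+) :
    B (single [a, b] 1) (single [d] 1) =
      (f1 a d * f1 b d) • single [a, b, d] 1 + (f1 a d * f2 b d) • single [a, d, b] 1 +
      (f1 a d * c b d) • single [a, b + d] 1 + f2 a d • single [d, a, b] 1 +
      c a d • single [a + d, b] 1 := by
  rw [h.cons_mul_cons, h.letter_mul_letter, h.mul_nil, h.mul_nil]
  simp only [mapDomain_add, mapDomain_smul, mapDomain_single, smul_add, mul_smul]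

theorem letter_mul_pair (a b d : ℕ+) :
    B (single [a] 1) (single [b, d] 1) =
      f1 a b • single [a, b, d] 1 + (f2 a b * f1 a d) • single [b, a, d] 1 +
      (f2 a b * f2 a d) • single [b, d, a] 1 + (f2 a b * c a d) • single [b, a + d] 1 +
      c a b • single [a + b, d] 1 := by
  rw [h.cons_mul_cons, h.nil_mul, h.letter_mul_letter, h.nil_mul]
  simp only [mapDomain_add, mapDomain_smul, mapDomain_single, smul_add, mul_smul, add_assoc]

theorem assoc_letters_apply (a b d : ℕ+) (w : List ℕ+) :
    f1 a b * B (single [a, b] 1) (single [d] 1) w +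
      f2 a b * B (single [b, a] 1) (single [d] 1) w +
      c a b * B (single [a + b] 1) (single [d] 1) w =
    f1 b d * B (single [a] 1) (single [b, d] 1) w +
      f2 b d * B (single [a] 1) (single [d, b] 1) w +
      c b d * B (single [a] 1) (single [b + d] 1) w := by
  have := DFunLike.congr_fun (h.assoc (single [a] 1) (single [b] 1) (single [d] 1)) w
  simpa only [h.letter_mul_letter, map_add, map_smul, LinearMap.add_apply, LinearMap.smul_apply,
    Finsupp.add_apply, Finsupp.smul_apply, smul_eq_mul] using this

theorem f1_eq_f2_swap {a b : ℕ+} (hab : a ≠ b) : f1 a b = f2 b a := by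
  have := DFunLike.congr_fun (h.comm (single [a] 1) (single [b] 1)) [a, b]
  simpa [h.letter_mul_letter, single_apply, hab, hab.symm] using this

theorem f1_eq_f2 (hc : ∀ a b, c a b ≠ 0) {a b d : ℕ+} (hab : a ≠ b) (hbd : b ≠ d)
    (hbad : b ≠ a + d) : f1 a b = f2 b d := by
  have := h.assoc_letters_apply a b d [a + d, b]
  simpa [h.pair_mul_letter, h.letter_mul_letter, h.letter_mul_pair, hab, hab.symm, hbd, hbd.symm,
    hbad, hbad.symm, hc a d] using this

theorem f1_mul_f1_mul_f1 {a b d : ℕ+} (hab : a ≠ b) (had : a ≠ d) (hbd : b ≠ d) :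
    f1 a b * (f1 a d * f1 b d) = f1 b d * f1 a b := by
  have := h.assoc_letters_apply a b d [a, b, d]
  simpa [h.pair_mul_letter, h.letter_mul_letter, h.letter_mul_pair, hab, hab.symm, hbd, hbd.symm,
    had, had.symm] using this

theorem f1_mul_f1 (hc : ∀ a b, c a b ≠ 0) {a b d : ℕ+} (hab : a ≠ b) (had : a ≠ d)
    (habd : a ≠ b + d) : f1 a b * f1 a d = f1 a (b + d) := by
  have hcoeff : f1 a b * (f1 a d * c b d) = c b d * f1 a (b + d) := by
    simpa [h.pair_mul_letter, h.letter_mul_letter, h.letter_mul_pair, hab, hab.symm, habd,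
      habd.symm, had] using h.assoc_letters_apply a b d [a, b + d]
  exact mul_right_cancel₀ (hc b d) (by linear_combination hcoeff)

theorem f1_self_f2_self_comm_relations {a b : ℕ+} (hab : a ≠ b) :
    f1 a a + f2 a a * f1 a b = f1 a a * f2 b a + f2 a a ∧
      f2 a a * f2 a b = f1 a a * f1 b a := by
  have hcomm w := DFunLike.congr_fun (h.comm (single [a] 1) (single [a, b] 1)) w
  constructor
  · simpa [h.pair_mul_letter, h.letter_mul_pair, hab, hab.symm] using hcomm [a, a, b]
  · simpa [h.pair_mul_letter, h.letter_mul_pair, hab, hab.symm] using hcomm [a, b, a]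

theorem f1_self_add_f2_self (hc : ∀ a b, c a b ≠ 0) {a b : ℕ+} (hab : a ≠ b) :
    f1 a a + f2 a a = f2 a b + f2 a (a + b) := by
  have hcoeff : f1 a a * c a b + f2 a a * c a b = f2 a b * c a b + c a b * f2 a (a + b) := by
    simpa [h.pair_mul_letter, h.letter_mul_letter, h.letter_mul_pair, hab, hab.symm] using
      h.assoc_letters_apply a a b [a + b, a]
  exact mul_right_cancel₀ (hc a b) (by linear_combination hcoeff)

theorem f1_eq_f1_succ_self (hc : ∀ a b, c a b ≠ 0) {a b : ℕ+} (hab : a ≠ b) :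
    f1 a b = f1 (b + 1) b := by
  have hb (x : ℕ+) : b ≠ x + (b + 1) := by rw [add_left_comm]; simp
  rw [h.f1_eq_f2 hc hab (by simp) (hb a), h.f1_eq_f2 hc (by simp) (by simp) (hb _)]

theorem f1_succ_succ_self (hc : ∀ a b, c a b ≠ 0) (n : ℕ+) :
    f1 (n + 1 + 1) (n + 1) = f1 (n + 1) n * f1 2 1 := by
  have hn : n + 1 + 1 ≠ n := by rw [add_assoc]; simp
  have h1 : n + 1 + 1 ≠ 1 := by simp
  rw [← h.f1_mul_f1 hc hn h1 (by simp), h.f1_eq_f1_succ_self hc hn, h.f1_eq_f1_succ_self hc h1]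
  rfl

theorem f1_two_one_eq_zero_or_one (hc : ∀ a b, c a b ≠ 0) : f1 2 1 = 0 ∨ f1 2 1 = 1 := by
  have h32 : f1 3 2 = f1 2 1 * f1 2 1 := h.f1_succ_succ_self hc 1
  have h31 : f1 3 1 = f1 2 1 := h.f1_eq_f1_succ_self hc (by decide)
  have h321 := h.f1_mul_f1_mul_f1 (a := 3) (b := 2) (d := 1) (by decide) (by decide) (by decide)
  rw [h32, h31] at h321
  have : f1 2 1 ^ 3 * (f1 2 1 - 1) = 0 := by linear_combination h321
  simpa [sub_eq_zero] using this

theorem f1_succ_self (hc : ∀ a b, c a b ≠ 0) (n : ℕ+) : f1 (n + 1) n = f1 2 1 := by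
  induction n using PNat.recOn with
  | one => rfl
  | succ n ih =>
    rw [h.f1_succ_succ_self hc, ih]
    rcases h.f1_two_one_eq_zero_or_one hc with h0 | h1 <;> simp [*]

theorem f1_f2_of_ne (hc : ∀ a b, c a b ≠ 0) {a b : ℕ+} (hab : a ≠ b) :
    f1 a b = f1 2 1 ∧ f2 a b = f1 2 1 := by
  refine ⟨?_, ?_⟩
  · rw [h.f1_eq_f1_succ_self hc hab, h.f1_succ_self hc]
  · rw [← h.f1_eq_f2_swap hab.symm, h.f1_eq_f1_succ_self hc hab.symm, h.f1_succ_self hc]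

theorem f1_f2_self [CharZero K] (hc : ∀ a b, c a b ≠ 0) (a : ℕ+) :
    f1 a a = f1 2 1 ∧ f2 a a = f1 2 1 := by
  have hab : a ≠ a + 1 := by simp
  obtain ⟨hcomm₁, hcomm₂⟩ := h.f1_self_f2_self_comm_relations hab
  have hsum := h.f1_self_add_f2_self hc hab
  have hoff {x y : ℕ+} (hxy : x ≠ y) := h.f1_f2_of_ne hc hxy
  simp only [(hoff hab).1, (hoff hab).2, (hoff hab.symm).1, (hoff hab.symm).2,
    (hoff (x := a) (y := a + (a + 1)) (by simp)).2] at hcomm₁ hcomm₂ hsum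
  have hdiag : f1 a a = f2 a a := by linear_combination hcomm₁ - hcomm₂
  have htwice : (2 : K) * f1 a a = 2 * f1 2 1 := by linear_combination hsum + hdiag
  have hf1 := mul_left_cancel₀ two_ne_zero htwice
  exact ⟨hf1, hdiag ▸ hf1⟩

end IsGradedWeakStuffle

end

/-- On the infinite alphabet `X = {x₁, x₂, ...}`, if a weak stuffle product has
`f₃(xᵢ⊗xⱼ)` a nonzero scalar multiple of `x_{i+j}` for all `i, j`, then the
underlying weak shuffle part is either null or the classical shuffle:
`f₁ ≡ 0 ≡ f₂` or `f₁ ≡ 1 ≡ f₂`. -/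
theorem weakStuffle_f3_graded {K : Type*} [Field K] [CharZero K]
    (B : (List ℕ+ →₀ K) →ₗ[K] (List ℕ+ →₀ K) →ₗ[K] (List ℕ+ →₀ K))
    (f1 f2 : ℕ+ → ℕ+ → K) (f3 : ℕ+ → ℕ+ → (ℕ+ →₀ K))
    (hcomm : ∀ x y, B x y = B y x)
    (hassoc : ∀ x y z, B (B x y) z = B x (B y z))
    (hunit : ∀ x, B (Finsupp.single [] 1) x = x)
    (hrec : ∀ (a b : ℕ+) (u v : List ℕ+),
      B (Finsupp.single (a :: u) 1) (Finsupp.single (b :: v) 1) =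
        f1 a b • Finsupp.mapDomain (a :: ·)
            (B (Finsupp.single u 1) (Finsupp.single (b :: v) 1)) +
        f2 a b • Finsupp.mapDomain (b :: ·)
            (B (Finsupp.single (a :: u) 1) (Finsupp.single v 1)) +
        (f3 a b).sum (fun x c => c • Finsupp.mapDomain (x :: ·)
            (B (Finsupp.single u 1) (Finsupp.single v 1))))
    (hf3 : ∀ i j : ℕ+, ∃ c : K, c ≠ 0 ∧ f3 i j = Finsupp.single (i + j) c) :
    (∀ a b : ℕ+, f1 a b = 0 ∧ f2 a b = 0) ∨
    (∀ a b : ℕ+, f1 a b = 1 ∧ f2 a b = 1) := by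
  choose c hc hf3_eq using hf3
  have h : IsGradedWeakStuffle B f1 f2 c := ⟨hcomm, hassoc, hunit, fun a b u v => by
    rw [hrec, hf3_eq, sum_single_index (by simp)]⟩
  have hall (a b : ℕ+) : f1 a b = f1 2 1 ∧ f2 a b = f1 2 1 := by
    obtain rfl | hab := eq_or_ne a b
    exacts [h.f1_f2_self hc a, h.f1_f2_of_ne hc hab]
  rcases h.f1_two_one_eq_zero_or_one hc with h0 | h1
  · exact .inl fun a b => h0 ▸ hall a b
  · exact .inr fun a b => h1 ▸ hall a b
end

section
/- Let ☐ be a weak stuffle product on K⟨X⟩ and Δ the deconcatenation coproduct. If Δ is an algebra morphism for ☐ (Δ(u ☐ v) = Δ(u) ☐ Δ(v) componentwise), then f₁(a⊗a) = f₂(a⊗a) = 1 for every letter a and f₁(a⊗b) = f₁(b⊗a) = 1 for all distinct letters a, b; that is, the underlying weak shuffle product is the classical shuffle product. -/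
/-!
Apply the coefficient functional `x ⊗ y ↦ x p * y q` to both sides of
`Δ(u ☐ v) = Δ u ☐ Δ v`. On the left it picks the coefficient of `p ++ q` in `u ☐ v`, since
`p ++ q` is the only word whose deconcatenation contains `p ⊗ q`. On the right it gives a sum,
over the splittings of `u` and `v`, of products of coefficients of shorter products. For
`u = p = [a]`, `v = q = [b]` the left side is `f₁(a, b)` (`f₁ + f₂` if `a = b`), while only the
unit splittings survive on the right, giving `1` (`2` if `a = b`). The extra equation needed to
separate `f₁(a, a)` from `f₂(a, a)` comes from `u = p = [a]` and `v = q = [a, a]`.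
-/

open scoped TensorProduct

/-- The deconcatenation coproduct of a word:
`Δ(w) = Σ_{u·v = w} u ⊗ v`, valued in `K⟨X⟩ ⊗ K⟨X⟩`. -/
noncomputable def decon {X : Type*} (K : Type*) [Field K] (w : List X) :
    TensorProduct K (List X →₀ K) (List X →₀ K) :=
  ∑ i ∈ Finset.range (w.length + 1),
    (Finsupp.single (w.take i) (1 : K)) ⊗ₜ[K] (Finsupp.single (w.drop i) (1 : K))

noncomputable def tensorCoeff (R : Type*) [CommSemiring R] {X : Type*} (p q : List X) :
    (List X →₀ R) ⊗[R] (List X →₀ R) →ₗ[R] R :=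
  TensorProduct.lift ((LinearMap.mul R R).compl₁₂ (Finsupp.lapply p) (Finsupp.lapply q))

@[simp]
lemma tensorCoeff_tmul {R X : Type*} [CommSemiring R] (p q : List X) (x y : List X →₀ R) :
    tensorCoeff R p q (x ⊗ₜ y) = x p * y q := by
  simp [tensorCoeff]

lemma take_eq_and_drop_eq_iff {X : Type*} {p q w : List X} :
    w.take p.length = p ∧ w.drop p.length = q ↔ w = p ++ q := by
  constructor
  · rintro ⟨hp, hq⟩
    rw [← List.take_append_drop p.length w, hp, hq]
  · rintro rfl
    simp

lemma tensorCoeff_decon {K X : Type*} [Field K] [DecidableEq X] (p q w : List X) :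
    tensorCoeff K p q (decon K w) = if p ++ q = w then 1 else 0 := by
  simp only [decon, map_sum, tensorCoeff_tmul, Finsupp.single_apply, mul_ite, mul_one, mul_zero]
  rw [Finset.sum_eq_single p.length]
  · rw [← ite_and]
    exact if_congr (by rw [and_comm, take_eq_and_drop_eq_iff, eq_comm]) rfl rfl
  · intro i hi hip
    have : w.take i ≠ p := by
      rintro rfl
      rw [Finset.mem_range] at hi
      exact hip (by rw [List.length_take]; omega)
    simp [this]
  · intro hp
    have : w.take p.length ≠ p := by
      intro h
      rw [Finset.mem_range] at hp
      have := congrArg List.length h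
      rw [List.length_take] at this
      omega
    simp [this]

lemma tensorCoeff_sum_decon {K X : Type*} [Field K] (p q : List X) (x : List X →₀ K) :
    tensorCoeff K p q (x.sum fun w c => c • decon K w) = x (p ++ q) := by
  classical
  simp only [map_finsuppSum, map_smul, tensorCoeff_decon, smul_eq_mul, mul_ite, mul_one, mul_zero]
  exact Finsupp.sum_ite_self_eq x (p ++ q)

section

variable {K X : Type*} [Field K]
  (B : (List X →₀ K) →ₗ[K] (List X →₀ K) →ₗ[K] (List X →₀ K))

local notation:70 u:71 " ☐ " v:71 => B (Finsupp.single u 1) (Finsupp.single v 1)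

def IsWeakStuffleRecursion (f1 f2 : X → X → K) (f3 : X → X → (X →₀ K)) : Prop :=
  ∀ (a b : X) (u v : List X),
    (a :: u) ☐ (b :: v) =
      f1 a b • Finsupp.mapDomain (a :: ·) (u ☐ (b :: v)) +
      f2 a b • Finsupp.mapDomain (b :: ·) ((a :: u) ☐ v) +
      (f3 a b).sum (fun x c => c • Finsupp.mapDomain (x :: ·) (u ☐ v))

def IsDeconMultiplicative : Prop :=
  ∀ u v : List X, (u ☐ v).sum (fun w c => c • decon K w) =
    ∑ i ∈ Finset.range (u.length + 1), ∑ j ∈ Finset.range (v.length + 1),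
      (u.take i ☐ v.take j) ⊗ₜ[K] (u.drop i ☐ v.drop j)

variable {B}

lemma IsDeconMultiplicative.apply_append (hΔ : IsDeconMultiplicative B) (u v p q : List X) :
    (u ☐ v) (p ++ q) =
      ∑ i ∈ Finset.range (u.length + 1), ∑ j ∈ Finset.range (v.length + 1),
        (u.take i ☐ v.take j) p * (u.drop i ☐ v.drop j) q := by
  rw [← tensorCoeff_sum_decon, hΔ]
  simp [map_sum]

lemma mapDomain_cons_apply_cons [DecidableEq X] (a c : X) (y : List X →₀ K) (w : List X) :
    Finsupp.mapDomain (a :: ·) y (c :: w) = if a = c then y w else 0 := by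
  split_ifs with h
  · subst h
    exact Finsupp.mapDomain_apply List.cons_injective y w
  · exact Finsupp.mapDomain_of_notMem_range _ _ (by simp [h])

lemma IsWeakStuffleRecursion.apply_cons [DecidableEq X] {f1 f2 : X → X → K}
    {f3 : X → X → X →₀ K} (hrec : IsWeakStuffleRecursion B f1 f2 f3)
    (a b c : X) (u v w : List X) :
    ((a :: u) ☐ (b :: v)) (c :: w) =
      (if a = c then f1 a b * (u ☐ (b :: v)) w else 0) +
      (if b = c then f2 a b * ((a :: u) ☐ v) w else 0) +
      f3 a b c * (u ☐ v) w := by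
  rw [hrec]
  simp only [Finsupp.add_apply, Finsupp.smul_apply, Finsupp.sum_apply]
  simp +contextual [mapDomain_cons_apply_cons, mul_ite]

variable {f1 f2 : X → X → K} {f3 : X → X → X →₀ K}

lemma f1_eq_one_of_ne (hunit : ∀ x, B (Finsupp.single [] 1) x = x)
    (hunit' : ∀ x, B x (Finsupp.single [] 1) = x) (hrec : IsWeakStuffleRecursion B f1 f2 f3)
    (hΔ : IsDeconMultiplicative B) {a b : X} (hab : a ≠ b) : f1 a b = 1 := by
  classical
  simpa [Finset.sum_range_succ, hrec.apply_cons, hunit, hunit', Finsupp.single_apply, hab,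
    hab.symm] using hΔ.apply_append [a] [b] [a] [b]

lemma f1_add_f2_self (hunit : ∀ x, B (Finsupp.single [] 1) x = x)
    (hunit' : ∀ x, B x (Finsupp.single [] 1) = x) (hrec : IsWeakStuffleRecursion B f1 f2 f3)
    (hΔ : IsDeconMultiplicative B) (a : X) : f1 a a + f2 a a = 2 := by
  classical
  have h : f1 a a + f2 a a = 1 + 1 := by
    simpa [Finset.sum_range_succ, hrec.apply_cons, hunit, hunit', Finsupp.single_apply]
      using hΔ.apply_append [a] [a] [a] [a]
  exact h.trans one_add_one_eq_two

lemma f2_self_eq_one (hunit : ∀ x, B (Finsupp.single [] 1) x = x)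
    (hunit' : ∀ x, B x (Finsupp.single [] 1) = x) (hrec : IsWeakStuffleRecursion B f1 f2 f3)
    (hΔ : IsDeconMultiplicative B) (a : X) : f2 a a = 1 := by
  classical
  have hsum := f1_add_f2_self hunit hunit' hrec hΔ a
  -- `([a] ☐ [a, a]) [a, a, a] = f1 + f2 ([a] ☐ [a]) [a, a]`, while the splittings
  -- `([a] ☐ [], [] ☐ [a, a])` and `([] ☐ [a], [a] ☐ [a])` contribute `1 + 2`.
  have h : f1 a a + f2 a a * 2 = 2 + 1 := by
    simpa [Finset.sum_range_succ, hrec.apply_cons, hunit, hunit', Finsupp.single_apply, hsum]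
      using hΔ.apply_append [a] [a, a] [a] [a, a]
  linear_combination h - hsum

end

theorem weakStuffle_decon_implies_classical_general {K X : Type*} [Field K]
    (B : (List X →₀ K) →ₗ[K] (List X →₀ K) →ₗ[K] (List X →₀ K))
    (f1 f2 : X → X → K) (f3 : X → X → (X →₀ K))
    (hcomm : ∀ x y, B x y = B y x)
    (hunit : ∀ x, B (Finsupp.single [] 1) x = x)
    (hrec : ∀ (a b : X) (u v : List X),
      B (Finsupp.single (a :: u) 1) (Finsupp.single (b :: v) 1) =
        f1 a b • Finsupp.mapDomain (a :: ·)
            (B (Finsupp.single u 1) (Finsupp.single (b :: v) 1)) +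
        f2 a b • Finsupp.mapDomain (b :: ·)
            (B (Finsupp.single (a :: u) 1) (Finsupp.single v 1)) +
        (f3 a b).sum (fun x c => c • Finsupp.mapDomain (x :: ·)
            (B (Finsupp.single u 1) (Finsupp.single v 1))))
    (hΔ : ∀ u v : List X,
      (B (Finsupp.single u 1) (Finsupp.single v 1)).sum
          (fun w c => c • decon K w) =
        ∑ i ∈ Finset.range (u.length + 1), ∑ j ∈ Finset.range (v.length + 1),
          (B (Finsupp.single (u.take i) 1) (Finsupp.single (v.take j) 1)) ⊗ₜ[K]
            (B (Finsupp.single (u.drop i) 1) (Finsupp.single (v.drop j) 1))) :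
    (∀ a : X, f1 a a = 1 ∧ f2 a a = 1) ∧
    (∀ a b : X, a ≠ b → f1 a b = 1 ∧ f1 b a = 1) := by
  have hunit' : ∀ x, B x (Finsupp.single [] 1) = x := fun x => (hcomm _ _).trans (hunit x)
  have hf2 (a : X) : f2 a a = 1 := f2_self_eq_one hunit hunit' hrec hΔ a
  refine ⟨fun a => ⟨?_, hf2 a⟩, fun a b hab => ⟨?_, ?_⟩⟩
  · linear_combination f1_add_f2_self hunit hunit' hrec hΔ a - hf2 a
  · exact f1_eq_one_of_ne hunit hunit' hrec hΔ hab
  · exact f1_eq_one_of_ne hunit hunit' hrec hΔ hab.symm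

/-- If the deconcatenation coproduct is an algebra morphism for a weak stuffle
product `☐`, then the underlying weak shuffle product is the classical shuffle
product: `f₁(a⊗a) = f₂(a⊗a) = 1` for every letter `a` and
`f₁(a⊗b) = f₁(b⊗a) = 1` for all distinct letters `a, b`. -/
theorem weakStuffle_decon_implies_classical {K X : Type*} [Field K]
    [CharZero K] [Countable X]
    (B : (List X →₀ K) →ₗ[K] (List X →₀ K) →ₗ[K] (List X →₀ K))
    (f1 f2 : X → X → K) (f3 : X → X → (X →₀ K))
    (hcomm : ∀ x y, B x y = B y x)
    (hassoc : ∀ x y z, B (B x y) z = B x (B y z))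
    (hunit : ∀ x, B (Finsupp.single [] 1) x = x)
    (hrec : ∀ (a b : X) (u v : List X),
      B (Finsupp.single (a :: u) 1) (Finsupp.single (b :: v) 1) =
        f1 a b • Finsupp.mapDomain (a :: ·)
            (B (Finsupp.single u 1) (Finsupp.single (b :: v) 1)) +
        f2 a b • Finsupp.mapDomain (b :: ·)
            (B (Finsupp.single (a :: u) 1) (Finsupp.single v 1)) +
        (f3 a b).sum (fun x c => c • Finsupp.mapDomain (x :: ·)
            (B (Finsupp.single u 1) (Finsupp.single v 1))))
    (hΔ : ∀ u v : List X,
      (B (Finsupp.single u 1) (Finsupp.single v 1)).sum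
          (fun w c => c • decon K w) =
        ∑ i ∈ Finset.range (u.length + 1), ∑ j ∈ Finset.range (v.length + 1),
          (B (Finsupp.single (u.take i) 1) (Finsupp.single (v.take j) 1)) ⊗ₜ[K]
            (B (Finsupp.single (u.drop i) 1) (Finsupp.single (v.drop j) 1))) :
    (∀ a : X, f1 a a = 1 ∧ f2 a a = 1) ∧
    (∀ a b : X, a ≠ b → f1 a b = 1 ∧ f1 b a = 1) :=
  weakStuffle_decon_implies_classical_general B f1 f2 f3 hcomm hunit hrec hΔ
end
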